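/- arXiv:1508.07733 — 13 statements merged into one kernel-verified Lean document; each statement's English description precedes it below -/
import Mathlib

section
/- Let G be a finite connected graph, v a vertex of G, and D an efficient dominating set of G with v ∈ D. Then every connected component Q of the induced subgraph G[N_3(v) ∪ N_4(v)] contains at least one vertex of D, i.e., |Q ∩ D| ≥ 1. -/
open SimpleGraph

/-- The `i`-th distance level of a vertex `v`: the set of vertices at distance exactly `i`
from `v` in `G`. -/
def distLevel {V : Type*} (G : SimpleGraph V) (v : V) (i : ℕ) : Set V :=
  {u : V | G.dist v u = i}

/-- A graph is `P₆`-free if it contains no induced subgraph isomorphic to the chordless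
path on 6 vertices. -/
def P6Free {V : Type*} (G : SimpleGraph V) : Prop :=
  ¬ ∃ f : Fin 6 ↪ V, ∀ i j : Fin 6,
      G.Adj (f i) (f j) ↔ ((i : ℕ) + 1 = (j : ℕ) ∨ (j : ℕ) + 1 = (i : ℕ))

/-- `D` is an efficient dominating set of `G`: every vertex is dominated by exactly one
vertex of `D` (a vertex dominates itself and its neighbors). -/
def IsEDS {V : Type*} (G : SimpleGraph V) (D : Set V) : Prop :=
  ∀ u : V, ∃! d : V, d ∈ D ∧ (d = u ∨ G.Adj d u)

/-- `Q` is (the vertex set of) a connected component of the subgraph of `G` induced by `S`: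
`Q` is a nonempty subset of `S`, `Q` induces a connected graph, and `Q` is closed under
adjacency within `S`. -/
def IsCompOf {V : Type*} (G : SimpleGraph V) (S Q : Set V) : Prop :=
  Q ⊆ S ∧ Q.Nonempty ∧ (G.induce Q).Connected ∧
    ∀ x ∈ Q, ∀ y ∈ S, G.Adj x y → y ∈ Q


lemma exists_pred {V : Type*} (G : SimpleGraph V) (hconn : G.Connected) {v x : V} {n : ℕ}
    (h : G.dist v x = n + 1) : ∃ y, G.Adj y x ∧ G.dist v y = n := by
  obtain ⟨p, hp⟩ := hconn.exists_walk_length_eq_dist x v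
  rw [SimpleGraph.dist_comm, h] at hp
  cases p with
  | nil => simp at hp
  | cons hadj r =>
    rename_i b
    refine ⟨b, hadj.symm, le_antisymm ?_ ?_⟩
    · calc G.dist v b ≤ r.reverse.length := SimpleGraph.dist_le _
        _ = n := by simpa using Nat.succ_injective hp
    · have htri := hconn.dist_triangle (u := v) (v := b) (w := x)
      rw [h, SimpleGraph.dist_eq_one_iff_adj.mpr hadj.symm] at htri
      omega

/-- If `D` is an efficient dominating set of a finite connected graph `G` with `v ∈ D`,
then every connected component `Q` of `G[N₃(v) ∪ N₄(v)]` contains at least one vertex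
of `D`. -/
theorem stmt_2 {V : Type*} [Fintype V] (G : SimpleGraph V) (hconn : G.Connected)
    (D : Set V) (hD : IsEDS G D) (v : V) (hv : v ∈ D)
    (Q : Set V) (hQ : IsCompOf G (distLevel G v 3 ∪ distLevel G v 4) Q) :
    1 ≤ (Q ∩ D).ncard := by
  obtain ⟨hQS, ⟨x, hx⟩, -, hclosed⟩ := hQ
  have hd2 : ∀ d ∈ D, G.dist v d ≠ 2 := by
    intro d hd h2
    obtain ⟨w, hwd, hw1⟩ := exists_pred G hconn h2
    have hadjvw : G.Adj v w := SimpleGraph.dist_eq_one_iff_adj.mp hw1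
    obtain ⟨e, -, hu⟩ := hD w
    have h1 := hu v ⟨hv, Or.inr hadjvw⟩
    have h2' := hu d ⟨hd, Or.inr hwd.symm⟩
    have hdv : d = v := h2'.trans h1.symm
    rw [hdv, SimpleGraph.dist_self] at h2
    exact two_ne_zero h2.symm
  have hy : ∃ y ∈ Q, G.dist v y = 3 := by
    rcases hQS hx with h3 | h4
    · exact ⟨x, hx, h3⟩
    · obtain ⟨y, hyx, hy3⟩ := exists_pred G hconn (show G.dist v x = 3 + 1 from h4)
      exact ⟨y, hclosed x hx y (Or.inl hy3) hyx.symm, hy3⟩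
  obtain ⟨y, hyQ, hy3⟩ := hy
  obtain ⟨d, ⟨hdD, hdom⟩, -⟩ := hD y
  have hdQ : d ∈ Q := by
    rcases hdom with rfl | hadj
    · exact hyQ
    · have hdy1 : G.dist d y = 1 := SimpleGraph.dist_eq_one_iff_adj.mpr hadj
      have hyd1 : G.dist y d = 1 := SimpleGraph.dist_eq_one_iff_adj.mpr hadj.symm
      have t1 := hconn.dist_triangle (u := v) (v := y) (w := d)
      have t2 := hconn.dist_triangle (u := v) (v := d) (w := y)
      rw [hy3, hyd1] at t1
      rw [hdy1, hy3] at t2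
      have hne2 := hd2 d hdD
      have : G.dist v d = 3 ∨ G.dist v d = 4 := by omega
      have hdS : d ∈ distLevel G v 3 ∪ distLevel G v 4 := by
        rcases this with h | h
        · exact Or.inl h
        · exact Or.inr h
      exact hclosed y hyQ d hdS hadj.symm
  have hne : (Q ∩ D).Nonempty := ⟨d, hdQ, hdD⟩
  have hfin : (Q ∩ D).Finite := Set.toFinite _
  rw [Nat.one_le_iff_ne_zero]
  simpa [Set.ncard_eq_zero hfin] using hne.ne_empty
end

section
/- Let G be a finite connected graph, v a vertex of G, and D an efficient dominating set of G with v ∈ D. If {q} is a trivial (one-vertex) connected component of the induced subgraph G[N_3(v) ∪ N_4(v)], then q ∈ D; i.e., the vertices of trivial components are forced to belong to every efficient dominating set containing v. -/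
open SimpleGraph

lemma exists_adj_dist_pred {V : Type*} {G : SimpleGraph V} (hconn : G.Connected)
    (v q : V) {n : ℕ} (h : G.dist v q = n) (hn : 0 < n) :
    ∃ x, G.Adj x q ∧ G.dist v x = n - 1 := by
  obtain ⟨p, hp⟩ := (hconn q v).exists_walk_length_eq_dist
  rw [SimpleGraph.dist_comm] at hp
  rw [h] at hp
  cases p with
  | nil => simp at hp; omega
  | cons hadj p' =>
    rename_i x
    refine ⟨x, hadj.symm, ?_⟩
    have h1 : G.dist v x ≤ n - 1 := by
      have hle := SimpleGraph.dist_le p'.reverse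
      rw [SimpleGraph.Walk.length_reverse] at hle
      simp only [SimpleGraph.Walk.length_cons] at hp
      omega
    have h2 : n ≤ G.dist v x + 1 := by
      have ht := hconn.dist_triangle (u := v) (v := x) (w := q)
      have : G.dist x q ≤ 1 := by
        rw [SimpleGraph.dist_eq_one_iff_adj.mpr hadj.symm] -- dist x q = 1
      omega
    omega

/-- If `D` is an efficient dominating set of a finite connected graph `G` with `v ∈ D`
and `{q}` is a trivial (one-vertex) connected component of `G[N₃(v) ∪ N₄(v)]`, then
`q ∈ D`. -/
theorem stmt_3 {V : Type*} [Fintype V] (G : SimpleGraph V) (hconn : G.Connected)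
    (D : Set V) (hD : IsEDS G D) (v : V) (hv : v ∈ D)
    (q : V) (hq : IsCompOf G (distLevel G v 3 ∪ distLevel G v 4) {q}) :
    q ∈ D := by
  obtain ⟨hsub, -, -, hclose⟩ := hq
  have hqS : q ∈ distLevel G v 3 ∪ distLevel G v 4 := hsub rfl
  -- rule out dist = 4
  have hq3 : G.dist v q = 3 := by
    rcases hqS with h3 | h4
    · exact h3
    · exfalso
      obtain ⟨x, hxadj, hxd⟩ := exists_adj_dist_pred hconn v q h4 (by norm_num)
      have hxS : x ∈ distLevel G v 3 ∪ distLevel G v 4 := Or.inl hxd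
      have := hclose q rfl x hxS hxadj.symm
      have hx : x = q := this
      rw [hx] at hxd
      rw [h4] at hxd
      omega
  obtain ⟨d, ⟨hdD, hdq⟩, huniq⟩ := hD q
  rcases hdq with rfl | hadj
  · exact hdD
  · exfalso
    -- d adjacent to q, d ∉ S
    have hdn3 : G.dist v d ≠ 3 := by
      intro h
      have := hclose q rfl d (Or.inl h) hadj.symm
      exact G.irrefl (this ▸ hadj)
    have hdn4 : G.dist v d ≠ 4 := by
      intro h
      have := hclose q rfl d (Or.inr h) hadj.symm
      exact G.irrefl (this ▸ hadj)
    have hle : G.dist v d ≤ 4 := by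
      have := hconn.dist_triangle (u := v) (v := q) (w := d)
      have h1 : G.dist q d ≤ 1 := le_of_eq (SimpleGraph.dist_eq_one_iff_adj.mpr hadj.symm)
      omega
    have hge : 2 ≤ G.dist v d := by
      have := hconn.dist_triangle (u := v) (v := d) (w := q)
      have h1 : G.dist d q ≤ 1 := le_of_eq (SimpleGraph.dist_eq_one_iff_adj.mpr hadj)
      omega
    have hd2 : G.dist v d = 2 := by omega
    obtain ⟨x, hxadj, hxd⟩ := exists_adj_dist_pred hconn v d hd2 (by norm_num)
    have hvx : G.Adj v x := SimpleGraph.dist_eq_one_iff_adj.mp hxd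
    have h1 := huniq  -- unused
    have heq : v = d := by
      have huv := (hD x).unique ⟨hv, Or.inr hvx⟩ ⟨hdD, Or.inr hxadj.symm⟩
      exact huv
    rw [heq] at hd2
    simp [SimpleGraph.dist_self] at hd2
end

section
/- Let G be a finite connected P6-free graph, v a vertex of G, and D an efficient dominating set of G with v ∈ D. Suppose x ∈ N_2(v) is adjacent to every vertex of a connected component Q of the induced subgraph G[N_3(v) ∪ N_4(v)]. Then |D ∩ Q| = 1, and the unique vertex of D ∩ Q is universal for Q, i.e., it is adjacent to every other vertex of Q. In particular, if Q has no universal vertex, then G has no efficient dominating set D with v ∈ D such that some vertex of N_2(v) has a join to Q. -/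
open SimpleGraph

/-- In a finite connected `P₆`-free graph, if `D` is an efficient dominating set with
`v ∈ D` and `x ∈ N₂(v)` has a join to a connected component `Q` of
`G[N₃(v) ∪ N₄(v)]`, then `D ∩ Q` consists of exactly one vertex, which is universal
for `Q`. -/
theorem stmt_5 {V : Type*} [Fintype V] (G : SimpleGraph V) (hconn : G.Connected)
    (hP6 : P6Free G) (D : Set V) (hD : IsEDS G D) (v : V) (hv : v ∈ D)
    (x : V) (hx : x ∈ distLevel G v 2) (Q : Set V)
    (hQ : IsCompOf G (distLevel G v 3 ∪ distLevel G v 4) Q)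
    (hjoin : ∀ y ∈ Q, G.Adj x y) :
    ∃ q : V, D ∩ Q = {q} ∧ ∀ y ∈ Q, y ≠ q → G.Adj q y := by
  classical
  obtain ⟨hQS, ⟨y0, hy0⟩, hQconn, hclose⟩ := hQ
  have hx2 : G.dist v x = 2 := hx
  have adj_dist : ∀ {a b : V}, G.Adj a b → G.dist a b ≤ 1 := by
    intro a b h
    simpa using G.dist_le (Walk.cons h Walk.nil)
  -- every vertex of Q is at distance exactly 3 from v
  have hQ3 : ∀ y ∈ Q, G.dist v y = 3 := by
    intro y hy
    have hle : G.dist v y ≤ 3 := by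
      have h1 := hconn.dist_triangle (u := v) (v := x) (w := y)
      have h2 := adj_dist (hjoin y hy)
      omega
    rcases hQS hy with h3 | h4
    · exact h3
    · exact absurd (h4 ▸ hle) (by norm_num)
  -- members of D other than v are at distance ≥ 3 from v
  have hDfar : ∀ d ∈ D, d ≠ v → 3 ≤ G.dist v d := by
    intro d hd hdv
    by_contra hlt
    push_neg at hlt
    obtain ⟨p, hp⟩ := (hconn v d).exists_walk_length_eq_dist
    rw [← hp] at hlt
    cases p with
    | nil => exact hdv rfl
    | cons h1 p' =>
      cases p' with
      | nil =>
        -- d adjacent to v : v dominated by both v and d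
        obtain ⟨e, -, hu⟩ := hD v
        have h1' : G.Adj v d := h1
        have e1 : d = e := hu d ⟨hd, Or.inr h1'.symm⟩
        have e2 : v = e := hu v ⟨hv, Or.inl rfl⟩
        exact hdv (e1.trans e2.symm)
      | cons h2 p'' =>
        cases p'' with
        | nil =>
          -- v - w - d : w dominated by both v and d
          obtain ⟨e, -, hu⟩ := hD _
          have e1 : d = e := hu d ⟨hd, Or.inr h2.symm⟩
          have e2 : v = e := hu v ⟨hv, Or.inr h1⟩
          exact hdv (e1.trans e2.symm)
        | cons h3 p''' => simp only [Walk.length_cons] at hlt; omega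
  -- the dominator of any y ∈ Q lies in Q
  have hdomQ : ∀ y ∈ Q, ∀ d, d ∈ D ∧ (d = y ∨ G.Adj d y) → d ∈ Q := by
    intro y hy d ⟨hdD, hcase⟩
    rcases hcase with rfl | hadj
    · exact hy
    · have hdv : d ≠ v := by
        rintro rfl
        have := adj_dist hadj
        have := hQ3 y hy
        omega
      have hub : G.dist v d ≤ 4 := by
        have h1 := hconn.dist_triangle (u := v) (v := y) (w := d)
        have h2 := adj_dist hadj.symm
        have := hQ3 y hy
        omega
      have hlb := hDfar d hdD hdv
      have hdS : d ∈ distLevel G v 3 ∪ distLevel G v 4 := by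
        interval_cases h : (G.dist v d)
        · exact Or.inl h
        · exact Or.inr h
      exact hclose y hy d hdS hadj.symm
  -- get a D-vertex q in Q : the dominator of y0
  obtain ⟨d0, hd0, -⟩ := hD y0
  have hd0Q : d0 ∈ Q := hdomQ y0 hy0 d0 hd0
  -- q is the unique dominator of x
  obtain ⟨dx, -, hux⟩ := hD x
  have hq_eq : ∀ d, d ∈ D → d ∈ Q → d = dx := fun d hdD hdQ =>
    hux d ⟨hdD, Or.inr (hjoin d hdQ).symm⟩
  have hd0x : d0 = dx := hq_eq d0 hd0.1 hd0Q
  refine ⟨d0, ?_, ?_⟩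
  · apply Set.eq_singleton_iff_unique_mem.mpr
    refine ⟨⟨hd0.1, hd0Q⟩, ?_⟩
    intro d ⟨hdD, hdQ⟩
    exact (hq_eq d hdD hdQ).trans hd0x.symm
  · intro y hy hne
    obtain ⟨dy, hdy, -⟩ := hD y
    have hdyQ : dy ∈ Q := hdomQ y hy dy hdy
    have : dy = d0 := (hq_eq dy hdy.1 hdyQ).trans hd0x.symm
    subst this
    rcases hdy.2 with rfl | hadj
    · exact absurd rfl hne
    · exact hadj
end

section
/- Let G be a finite connected graph, v a vertex of G, and D an efficient dominating set of G with v ∈ D. Suppose x ∈ N_2(v) is adjacent to every vertex of a connected component Q_i of the induced subgraph G[N_3(v) ∪ N_4(v)]. Then for every neighbor y of x that lies in a connected component Q_j of G[N_3(v) ∪ N_4(v)] with Q_j ≠ Q_i, one has y ∉ D. -/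
open SimpleGraph

lemma comp_subset_of_mem {V : Type*} {G : SimpleGraph V} {S Qi Qj : Set V}
    (hQi : IsCompOf G S Qi) (hQj : IsCompOf G S Qj) {p : V}
    (hpi : p ∈ Qi) (hpj : p ∈ Qj) : Qj ⊆ Qi := by
  intro q hq
  have hreach : (G.induce Qj).Reachable ⟨p, hpj⟩ ⟨q, hq⟩ := hQj.2.2.1.preconnected _ _
  obtain ⟨w⟩ := hreach
  have key : ∀ (a b : Qj) (w : (G.induce Qj).Walk a b), (a : V) ∈ Qi → (b : V) ∈ Qi := by
    intro a b w
    induction w with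
    | nil => exact fun h => h
    | @cons a c b h w ih =>
      intro ha
      exact ih (hQi.2.2.2 _ ha _ (hQj.1 c.2) h)
  exact key _ _ w hpi

/-- If `D` is an efficient dominating set of a finite connected graph `G` with `v ∈ D`
and `x ∈ N₂(v)` has a join to a connected component `Qi` of `G[N₃(v) ∪ N₄(v)]`, then
every neighbor `y` of `x` lying in a different connected component `Qj` of
`G[N₃(v) ∪ N₄(v)]` satisfies `y ∉ D`. -/
theorem stmt_6 {V : Type*} [Fintype V] (G : SimpleGraph V) (hconn : G.Connected)
    (D : Set V) (hD : IsEDS G D) (v : V) (hv : v ∈ D)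
    (x : V) (hx : x ∈ distLevel G v 2) (Qi Qj : Set V)
    (hQi : IsCompOf G (distLevel G v 3 ∪ distLevel G v 4) Qi)
    (hQj : IsCompOf G (distLevel G v 3 ∪ distLevel G v 4) Qj)
    (hne : Qj ≠ Qi)
    (hjoin : ∀ z ∈ Qi, G.Adj x z)
    (y : V) (hy : y ∈ Qj) (hxy : G.Adj x y) :
    y ∉ D := by
  intro hyD
  obtain ⟨z, hz⟩ := hQi.2.1
  have hxz : G.Adj x z := hjoin z hz
  have hzS := hQi.1 hz
  have hdx : G.dist v x = 2 := hx
  -- dist v z = 3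
  have hdz : G.dist v z = 3 := by
    have h1 : G.dist x z = 1 := dist_eq_one_iff_adj.mpr hxz
    have h2 : G.dist v z ≤ G.dist v x + G.dist x z := hconn.dist_triangle
    rcases hzS with h | h
    · exact h
    · have : G.dist v z = 4 := h
      omega
  -- z's unique dominator d
  obtain ⟨d, ⟨hdD, hdz'⟩, huniq⟩ := hD z
  -- case: d ∈ Qi
  have hcase : d ∈ Qi ∨ (G.Adj d z ∧ d ∉ (distLevel G v 3 ∪ distLevel G v 4)) := by
    rcases hdz' with rfl | hadj
    · exact Or.inl hz
    · by_cases hdS : d ∈ (distLevel G v 3 ∪ distLevel G v 4)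
      · exact Or.inl (hQi.2.2.2 z hz d hdS hadj.symm)
      · exact Or.inr ⟨hadj, hdS⟩
  rcases hcase with hdQi | ⟨hadj, hdS⟩
  · -- d dominates x, y dominates x, so d = y, so y ∈ Qi ∩ Qj → Qi = Qj
    have hxd : G.Adj x d := hjoin d hdQi
    obtain ⟨e, -, heuniq⟩ := hD x
    have h1 : d = e := heuniq d ⟨hdD, Or.inr hxd.symm⟩
    have h2 : y = e := heuniq y ⟨hyD, Or.inr hxy.symm⟩
    have hyQi : y ∈ Qi := h2 ▸ h1 ▸ hdQi
    exact hne (Set.Subset.antisymm (comp_subset_of_mem hQi hQj hyQi hy)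
      (comp_subset_of_mem hQj hQi hy hyQi))
  · -- d at distance 2 from v
    have hdzd : G.dist d z = 1 := dist_eq_one_iff_adj.mpr hadj
    have hub : G.dist v d ≤ G.dist v z + G.dist z d := hconn.dist_triangle
    have hlb : G.dist v z ≤ G.dist v d + G.dist d z := hconn.dist_triangle
    have hzd : G.dist z d = 1 := by rw [dist_comm]; exact hdzd
    have h3 : G.dist v d ≠ 3 := fun h => hdS (Or.inl h)
    have h4 : G.dist v d ≠ 4 := fun h => hdS (Or.inr h)
    have hdd : G.dist v d = 2 := by omega
    obtain ⟨p, hp⟩ := exists_walk_of_dist_ne_zero (by omega : G.dist v d ≠ 0)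
    rw [hdd] at hp
    set w' := p.getVert 1 with hw'
    have hvw : G.Adj v w' := by
      have := p.adj_getVert_succ (by omega : 0 < p.length)
      simpa using this
    have hwd : G.Adj w' d := by
      have := p.adj_getVert_succ (by omega : 1 < p.length)
      have h2 : p.getVert 2 = d := by
        have := p.getVert_length
        rwa [hp] at this
      rwa [h2] at this
    obtain ⟨e, -, heuniq⟩ := hD w'
    have h1 : v = e := heuniq v ⟨hv, Or.inr hvw⟩
    have h2 : d = e := heuniq d ⟨hdD, Or.inr hwd.symm⟩
    have : v = d := h1.trans h2.symm
    rw [← this] at hdd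
    simp [dist_self] at hdd
end

section
/- Let G be a finite connected P6-free graph, v a vertex of G such that N_2(v) induces a complete subgraph, and let x, x' ∈ N_2(v). Let y_1z_1 be an edge inside a connected component Q_i of the induced subgraph G[N_3(v) ∪ N_4(v)] and y_2z_2 an edge inside a connected component Q_j of G[N_3(v) ∪ N_4(v)] with Q_i ≠ Q_j. If x is adjacent to y_1 but not to z_1, and x' is adjacent to y_2 but not to z_2, then x is adjacent to y_2, or x is adjacent to z_2, or x' is adjacent to y_1, or x' is adjacent to z_1. -/
open SimpleGraph

/-! If all four adjacencies fail, `z₁ y₁ x x' y₂ z₂` is an induced `P₆`: `x x'` is an edge because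
`N₂(v)` is a clique, and there are no edges between the distinct components `Qi` and `Qj`. -/

namespace IsCompOf

variable {V : Type*} {G : SimpleGraph V} {S Q Q' : Set V}

lemma subset_of_mem (h : IsCompOf G S Q) (h' : IsCompOf G S Q') {w : V} (hw : w ∈ Q)
    (hw' : w ∈ Q') : Q ⊆ Q' := by
  obtain ⟨hQS, -, hconn, -⟩ := h
  intro u hu
  obtain ⟨p⟩ := hconn ⟨w, hw⟩ ⟨u, hu⟩
  suffices H : ∀ (a b : Q), (G.induce Q).Walk a b → (a : V) ∈ Q' → (b : V) ∈ Q' from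
    H _ _ p hw'
  intro a b p
  induction p with
  | nil => exact id
  | cons hadj _ ih => exact fun ha ↦ ih (h'.2.2.2 _ ha _ (hQS (Subtype.mem _)) hadj)

lemma eq_of_mem (h : IsCompOf G S Q) (h' : IsCompOf G S Q') {w : V} (hw : w ∈ Q)
    (hw' : w ∈ Q') : Q = Q' :=
  (h.subset_of_mem h' hw hw').antisymm (h'.subset_of_mem h hw' hw)

lemma not_adj_of_ne (h : IsCompOf G S Q) (h' : IsCompOf G S Q') (hne : Q ≠ Q') {a b : V}
    (ha : a ∈ Q) (hb : b ∈ Q') : ¬ G.Adj a b :=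
  fun hab ↦ hne (h.eq_of_mem h' (h.2.2.2 a ha b (h'.1 hb) hab) hb)

end IsCompOf

lemma P6Free.false_of_induced_path {V : Type*} {G : SimpleGraph V} (hG : P6Free G)
    {a b c d e f : V} (hab : G.Adj a b) (hbc : G.Adj b c) (hcd : G.Adj c d) (hde : G.Adj d e)
    (hef : G.Adj e f) (hac : ¬ G.Adj a c) (had : ¬ G.Adj a d) (hae : ¬ G.Adj a e)
    (haf : ¬ G.Adj a f) (hbd : ¬ G.Adj b d) (hbe : ¬ G.Adj b e) (hbf : ¬ G.Adj b f)
    (hce : ¬ G.Adj c e) (hcf : ¬ G.Adj c f) (hdf : ¬ G.Adj d f) : False := by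
  let p : Fin 6 → V := ![a, b, c, d, e, f]
  have hp : ∀ i j : Fin 6, G.Adj (p i) (p j) ↔ ((i : ℕ) + 1 = j ∨ (j : ℕ) + 1 = i) := by
    intro i j
    fin_cases i <;> fin_cases j <;> simp [p, G.adj_comm, *]
  -- Distinct vertices of `P₆` have distinct neighbourhoods, so `p` is injective.
  have hrows : ∀ i j : Fin 6,
      (∀ k : Fin 6, ((i : ℕ) + 1 = k ∨ (k : ℕ) + 1 = i) ↔ ((j : ℕ) + 1 = k ∨ (k : ℕ) + 1 = j)) →
      i = j := by
    decide
  refine hG ⟨⟨p, fun i j hij ↦ hrows i j fun k ↦ ?_⟩, hp⟩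
  rw [← hp, ← hp, hij]

theorem stmt_7_general {V : Type*} (G : SimpleGraph V)
    (hP6 : P6Free G) (v : V) (hclique : G.IsClique (distLevel G v 2))
    (x x' : V) (hx : x ∈ distLevel G v 2) (hx' : x' ∈ distLevel G v 2)
    (Qi Qj : Set V)
    (hQi : IsCompOf G (distLevel G v 3 ∪ distLevel G v 4) Qi)
    (hQj : IsCompOf G (distLevel G v 3 ∪ distLevel G v 4) Qj)
    (hne : Qi ≠ Qj)
    (y₁ z₁ : V) (hy₁ : y₁ ∈ Qi) (hz₁ : z₁ ∈ Qi) (he₁ : G.Adj y₁ z₁)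
    (y₂ z₂ : V) (hy₂ : y₂ ∈ Qj) (hz₂ : z₂ ∈ Qj) (he₂ : G.Adj y₂ z₂)
    (hxy₁ : G.Adj x y₁) (hxz₁ : ¬ G.Adj x z₁)
    (hx'y₂ : G.Adj x' y₂) (hx'z₂ : ¬ G.Adj x' z₂) :
    G.Adj x y₂ ∨ G.Adj x z₂ ∨ G.Adj x' y₁ ∨ G.Adj x' z₁ := by
  by_contra! ⟨hxy₂, hxz₂, hx'y₁, hx'z₁⟩
  have hxx' : G.Adj x x' := hclique hx hx' fun h ↦ hxy₂ (h ▸ hx'y₂)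
  have hcross : ∀ {a b}, a ∈ Qi → b ∈ Qj → ¬ G.Adj a b := hQi.not_adj_of_ne hQj hne
  exact hP6.false_of_induced_path he₁.symm hxy₁.symm hxx' hx'y₂ he₂
    (fun h ↦ hxz₁ h.symm) (fun h ↦ hx'z₁ h.symm) (hcross hz₁ hy₂) (hcross hz₁ hz₂)
    (fun h ↦ hx'y₁ h.symm) (hcross hy₁ hy₂) (hcross hy₁ hz₂) hxy₂ hxz₂ hx'z₂

/-- In a finite connected `P₆`-free graph in which `N₂(v)` is a clique: if
`x, x' ∈ N₂(v)`, `y₁z₁` is an edge inside a component `Qi` of `G[N₃(v) ∪ N₄(v)]`,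
`y₂z₂` is an edge inside a different component `Qj`, `x` is adjacent to `y₁` but not
to `z₁`, and `x'` is adjacent to `y₂` but not to `z₂`, then `x` is adjacent to `y₂`
or to `z₂`, or `x'` is adjacent to `y₁` or to `z₁`. -/
theorem stmt_7 {V : Type*} [Fintype V] (G : SimpleGraph V) (hconn : G.Connected)
    (hP6 : P6Free G) (v : V) (hclique : G.IsClique (distLevel G v 2))
    (x x' : V) (hx : x ∈ distLevel G v 2) (hx' : x' ∈ distLevel G v 2)
    (Qi Qj : Set V)
    (hQi : IsCompOf G (distLevel G v 3 ∪ distLevel G v 4) Qi)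
    (hQj : IsCompOf G (distLevel G v 3 ∪ distLevel G v 4) Qj)
    (hne : Qi ≠ Qj)
    (y₁ z₁ : V) (hy₁ : y₁ ∈ Qi) (hz₁ : z₁ ∈ Qi) (he₁ : G.Adj y₁ z₁)
    (y₂ z₂ : V) (hy₂ : y₂ ∈ Qj) (hz₂ : z₂ ∈ Qj) (he₂ : G.Adj y₂ z₂)
    (hxy₁ : G.Adj x y₁) (hxz₁ : ¬ G.Adj x z₁)
    (hx'y₂ : G.Adj x' y₂) (hx'z₂ : ¬ G.Adj x' z₂) :
    G.Adj x y₂ ∨ G.Adj x z₂ ∨ G.Adj x' y₁ ∨ G.Adj x' z₁ :=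
  stmt_7_general G hP6 v hclique x x' hx hx' Qi Qj hQi hQj hne y₁ z₁ hy₁ hz₁ he₁ y₂ z₂ hy₂ hz₂ he₂
    hxy₁ hxz₁ hx'y₂ hx'z₂
end

section
/- Let G be a finite connected P6-free graph, v a vertex of G, x ∈ N_2(v), and y a neighbor of x with y ∈ N_3(v) ∪ N_4(v). Let z_1, z_2 ∈ N_3(v) ∪ N_4(v) be adjacent vertices with z_1, z_2 both non-adjacent to x. Then y does not distinguish the edge z_1z_2; i.e., it is not the case that y is adjacent to z_1 and non-adjacent to z_2. -/
open SimpleGraph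

/-- In a finite connected `P₆`-free graph: if `x ∈ N₂(v)`, `y` is a neighbor of `x`
with `y ∈ N₃(v) ∪ N₄(v)`, and `z₁z₂` is an edge inside `N₃(v) ∪ N₄(v)` with `z₁, z₂`
both non-adjacent to `x`, then `y` does not distinguish the edge `z₁z₂`. -/
theorem stmt_8 {V : Type*} [Fintype V] (G : SimpleGraph V) (hconn : G.Connected)
    (hP6 : P6Free G) (v : V)
    (x : V) (hx : x ∈ distLevel G v 2)
    (y : V) (hxy : G.Adj x y) (hy : y ∈ distLevel G v 3 ∪ distLevel G v 4)
    (z₁ z₂ : V) (hz₁ : z₁ ∈ distLevel G v 3 ∪ distLevel G v 4)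
    (hz₂ : z₂ ∈ distLevel G v 3 ∪ distLevel G v 4)
    (hzz : G.Adj z₁ z₂) (hxz₁ : ¬ G.Adj x z₁) (hxz₂ : ¬ G.Adj x z₂) :
    ¬ (G.Adj y z₁ ∧ ¬ G.Adj y z₂) := by
  rintro ⟨hyz₁, hyz₂⟩
  have hdx : G.dist v x = 2 := hx
  have hdy : 3 ≤ G.dist v y := by
    rcases hy with h | h <;> simp only [distLevel, Set.mem_setOf_eq] at h <;> omega
  have hdz₁ : 3 ≤ G.dist v z₁ := by
    rcases hz₁ with h | h <;> simp only [distLevel, Set.mem_setOf_eq] at h <;> omega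
  have hdz₂ : 3 ≤ G.dist v z₂ := by
    rcases hz₂ with h | h <;> simp only [distLevel, Set.mem_setOf_eq] at h <;> omega
  -- find the middle vertex a on a shortest v-x path
  obtain ⟨p, hp⟩ := hconn.exists_walk_length_eq_dist v x
  rw [hdx] at hp
  obtain ⟨a, hva, q, rfl⟩ := p.exists_eq_cons_of_ne
    (by intro h; subst h; simp [SimpleGraph.dist_self] at hdx)
  have hq : q.length = 1 := by simpa using hp
  have hax : G.Adj a x := by
    cases q with
    | nil => simp at hq
    | cons h r =>
      cases r with
      | nil => exact h
      | cons h' r' => simp at hq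
  have hda : G.dist v a = 1 := SimpleGraph.dist_eq_one_iff_adj.mpr hva
  have key : ∀ b c : V, G.dist v b + 1 < G.dist v c → ¬ G.Adj b c := by
    intro b c h hadj
    have h1 : G.dist b c ≤ 1 := by simpa using G.dist_le hadj.toWalk
    have h2 := hconn.dist_triangle (u := v) (v := b) (w := c)
    omega
  have hd0 : G.dist v v = 0 := SimpleGraph.dist_self
  -- nonadjacency facts
  have nvx : ¬ G.Adj v x := key v x (by omega)
  have nvy : ¬ G.Adj v y := key v y (by omega)
  have nvz₁ : ¬ G.Adj v z₁ := key v z₁ (by omega)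
  have nvz₂ : ¬ G.Adj v z₂ := key v z₂ (by omega)
  have nay : ¬ G.Adj a y := key a y (by omega)
  have naz₁ : ¬ G.Adj a z₁ := key a z₁ (by omega)
  have naz₂ : ¬ G.Adj a z₂ := key a z₂ (by omega)
  -- distinctness
  have dvx : v ≠ x := by intro h; subst h; omega
  have dvy : v ≠ y := by intro h; subst h; omega
  have dvz₁ : v ≠ z₁ := by intro h; subst h; omega
  have dvz₂ : v ≠ z₂ := by intro h; subst h; omega
  have dax : a ≠ x := by intro h; subst h; omega
  have day : a ≠ y := by intro h; subst h; omega
  have daz₁ : a ≠ z₁ := by intro h; subst h; omega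
  have daz₂ : a ≠ z₂ := by intro h; subst h; omega
  have dxy : x ≠ y := hxy.ne
  have dxz₁ : x ≠ z₁ := by intro h; subst h; omega
  have dxz₂ : x ≠ z₂ := by intro h; subst h; omega
  have dyz₁ : y ≠ z₁ := hyz₁.ne
  have dyz₂ : y ≠ z₂ := by intro h; subst h; exact hxz₂ hxy
  have dz : z₁ ≠ z₂ := hzz.ne
  have dva : v ≠ a := hva.ne
  -- build the induced P6
  apply hP6
  refine ⟨⟨![v, a, x, y, z₁, z₂], ?_⟩, ?_⟩
  · intro i j hij
    fin_cases i <;> fin_cases j <;>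
      simp only [Fin.isValue, Matrix.cons_val_zero, Matrix.cons_val_one, Matrix.head_cons,
        Matrix.cons_val_two, Matrix.tail_cons, Matrix.cons_val_three,
        Matrix.cons_val_four, Matrix.cons_val_fin_one] at hij <;>
      first
        | rfl
        | (exact absurd hij dva) | (exact absurd hij.symm dva)
        | (exact absurd hij dvx) | (exact absurd hij.symm dvx)
        | (exact absurd hij dvy) | (exact absurd hij.symm dvy)
        | (exact absurd hij dvz₁) | (exact absurd hij.symm dvz₁)
        | (exact absurd hij dvz₂) | (exact absurd hij.symm dvz₂)
        | (exact absurd hij dax) | (exact absurd hij.symm dax)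
        | (exact absurd hij day) | (exact absurd hij.symm day)
        | (exact absurd hij daz₁) | (exact absurd hij.symm daz₁)
        | (exact absurd hij daz₂) | (exact absurd hij.symm daz₂)
        | (exact absurd hij dxy) | (exact absurd hij.symm dxy)
        | (exact absurd hij dxz₁) | (exact absurd hij.symm dxz₁)
        | (exact absurd hij dxz₂) | (exact absurd hij.symm dxz₂)
        | (exact absurd hij dyz₁) | (exact absurd hij.symm dyz₁)
        | (exact absurd hij dyz₂) | (exact absurd hij.symm dyz₂)
        | (exact absurd hij dz) | (exact absurd hij.symm dz)
  · intro i j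
    fin_cases i <;> fin_cases j <;>
      simp only [Fin.isValue, Matrix.cons_val_zero, Matrix.cons_val_one, Matrix.head_cons,
        Matrix.cons_val_two, Matrix.tail_cons, Matrix.cons_val_three, Matrix.cons_val_four,
        Fin.val_zero, Fin.val_one, Fin.val_two, Function.Embedding.coeFn_mk] <;>
      norm_num <;>
      first
        | exact G.irrefl
        | assumption
        | (exact hva.symm)
        | (exact hax.symm)
        | (exact hxy.symm)
        | (exact hyz₁.symm)
        | (exact hzz.symm)
        | (intro h; exact nvx h.symm)
        | (intro h; exact nvy h.symm)
        | (intro h; exact nvz₁ h.symm)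
        | (intro h; exact nvz₂ h.symm)
        | (intro h; exact nay h.symm)
        | (intro h; exact naz₁ h.symm)
        | (intro h; exact naz₂ h.symm)
        | (intro h; exact hxz₁ h.symm)
        | (intro h; exact hxz₂ h.symm)
        | (intro h; exact hyz₂ h.symm)
end

section
/- Let G be a finite connected P6-free graph and v a vertex of G such that N_2(v) induces a complete subgraph. Suppose that every vertex x ∈ N_2(v) that has a neighbor in a connected component Q of the induced subgraph G[N_3(v) ∪ N_4(v)] which is not a clique also has a non-neighbor in Q, and suppose that at least one connected component of G[N_3(v) ∪ N_4(v)] is not a clique. Then there exists a vertex b* ∈ N_2(v) that has a neighbor in every connected component of G[N_3(v) ∪ N_4(v)] which is not a clique. -/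
open SimpleGraph

/-!
For `b ∈ N₂(v)` let `C(b)` be the set of non-clique components of `G[N₃(v) ∪ N₄(v)]` contacted
by `b`, and take `b` with `C(b)` maximal. Walking back along shortest paths from `v`, every
component is contacted by some vertex of `N₂(v)`; so a non-clique component `Q` missed by `b`
is contacted by some `b' ∈ N₂(v)`, which is adjacent to `b`. As `b` and `b'` have a neighbour and
a non-neighbour in every component they contact, `P₆`-freeness forces `b'` to contact every
component of `C(b)`, whence `C(b) ⊊ C(b')`.
-/

namespace SimpleGraph

variable {V : Type*} {G : SimpleGraph V}

lemma exists_adj_dist_eq_of_dist_eq_succ {u v : V} {k : ℕ} (h : G.dist u v = k + 1) :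
    ∃ w, G.Adj w v ∧ G.dist u w = k := by
  obtain ⟨p, hp⟩ := exists_walk_of_dist_ne_zero (show G.dist u v ≠ 0 by omega)
  have hnil : ¬ p.Nil := fun hn => by rw [Walk.length_eq_zero_iff.mpr hn, h] at hp; omega
  refine ⟨p.penultimate, p.adj_penultimate hnil, le_antisymm ?_ ?_⟩
  · simpa [hp, h] using dist_le p.dropLast
  · rcases (p.adj_penultimate hnil).diff_dist_adj (u := u) with h' | h' | h' <;> omega

lemma exists_boundary_adj_of_connected_induce {Q : Set V} (hQ : (G.induce Q).Connected)
    (P : V → Prop) {a c : V} (ha : a ∈ Q) (hc : c ∈ Q) (hPa : P a) (hPc : ¬ P c) :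
    ∃ u ∈ Q, ∃ w ∈ Q, G.Adj u w ∧ P u ∧ ¬ P w := by
  obtain ⟨p⟩ := hQ.preconnected ⟨a, ha⟩ ⟨c, hc⟩
  obtain ⟨d, -, hu, hw⟩ := p.exists_boundary_dart {x | P x} hPa hPc
  exact ⟨d.fst, d.fst.2, d.snd, d.snd.2, by simpa using d.adj, hu, hw⟩

end SimpleGraph

open SimpleGraph

section

variable {V : Type*} {G : SimpleGraph V} {S Q₁ Q₂ : Set V}

lemma IsCompOf.subset_of_mem_s9 (h₁ : IsCompOf G S Q₁) (h₂ : IsCompOf G S Q₂) {z : V}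
    (hz₁ : z ∈ Q₁) (hz₂ : z ∈ Q₂) : Q₁ ⊆ Q₂ := by
  intro x hx
  by_contra hx₂
  obtain ⟨u, -, w, hw, huw, hu, hw₂⟩ :=
    exists_boundary_adj_of_connected_induce h₁.2.2.1 (· ∈ Q₂) hz₁ hx hz₂ hx₂
  exact hw₂ (h₂.2.2.2 u hu w (h₁.1 hw) huw)

lemma IsCompOf.eq_of_adj (h₁ : IsCompOf G S Q₁) (h₂ : IsCompOf G S Q₂) {x y : V}
    (hx : x ∈ Q₁) (hy : y ∈ Q₂) (hxy : G.Adj x y) : Q₁ = Q₂ := by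
  have hy₁ : y ∈ Q₁ := h₁.2.2.2 x hx y (h₂.1 hy) hxy
  exact (h₁.subset_of_mem_s9 h₂ hy₁ hy).antisymm (h₂.subset_of_mem_s9 h₁ hy hy₁)

/- Distinct vertices of `P₆` have distinct neighbourhoods, so a map reproducing its adjacency
pattern is automatically injective. -/
lemma P6Free.not_forall_adj_iff (hG : P6Free G) (f : Fin 6 → V) :
    ¬ ∀ i j : Fin 6, G.Adj (f i) (f j) ↔ ((i : ℕ) + 1 = (j : ℕ) ∨ (j : ℕ) + 1 = (i : ℕ)) := by
  intro hf
  have hpath : ∀ i j : Fin 6, (∀ k : Fin 6, ((i : ℕ) + 1 = k ∨ (k : ℕ) + 1 = i) ↔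
      ((j : ℕ) + 1 = k ∨ (k : ℕ) + 1 = j)) → i = j := by decide
  refine hG ⟨⟨f, fun i j hij => hpath i j fun k => ?_⟩, hf⟩
  rw [← hf, ← hf, hij]

lemma P6Free.false_of_induced_path_s9 (hG : P6Free G) {x₀ x₁ x₂ x₃ x₄ x₅ : V}
    (h₀₁ : G.Adj x₀ x₁) (h₁₂ : G.Adj x₁ x₂) (h₂₃ : G.Adj x₂ x₃) (h₃₄ : G.Adj x₃ x₄)
    (h₄₅ : G.Adj x₄ x₅) (h₀₂ : ¬ G.Adj x₀ x₂) (h₀₃ : ¬ G.Adj x₀ x₃) (h₀₄ : ¬ G.Adj x₀ x₄)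
    (h₀₅ : ¬ G.Adj x₀ x₅) (h₁₃ : ¬ G.Adj x₁ x₃) (h₁₄ : ¬ G.Adj x₁ x₄) (h₁₅ : ¬ G.Adj x₁ x₅)
    (h₂₄ : ¬ G.Adj x₂ x₄) (h₂₅ : ¬ G.Adj x₂ x₅) (h₃₅ : ¬ G.Adj x₃ x₅) : False := by
  refine hG.not_forall_adj_iff ![x₀, x₁, x₂, x₃, x₄, x₅] fun i j => ?_
  fin_cases i <;> fin_cases j <;> simp [*, G.adj_comm]

/-- If `b₂` missed `Q₁`, then `w - u - b₁ - b₂ - z - z'` would be an induced `P₆`, where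
`uw` is an edge of `Q₁` with `b₁ ∼ u`, `b₁ ≁ w` and `zz'` an edge of `Q₂` with
`b₂ ∼ z`, `b₂ ≁ z'`. -/
lemma P6Free.exists_adj_of_isCompOf_of_adj (hG : P6Free G) (h₁ : IsCompOf G S Q₁)
    (h₂ : IsCompOf G S Q₂) {b₁ b₂ : V} (hb : G.Adj b₁ b₂)
    (hb₁ : ∃ y ∈ Q₁, G.Adj b₁ y) (hb₁' : ∃ y ∈ Q₁, ¬ G.Adj b₁ y)
    (hb₁Q₂ : ¬ ∃ y ∈ Q₂, G.Adj b₁ y)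
    (hb₂ : ∃ y ∈ Q₂, G.Adj b₂ y) (hb₂' : ∃ y ∈ Q₂, ¬ G.Adj b₂ y) :
    ∃ y ∈ Q₁, G.Adj b₂ y := by
  by_contra hb₂Q₁
  push Not at hb₁Q₂ hb₂Q₁
  obtain ⟨a₁, ha₁, hba₁⟩ := hb₁
  obtain ⟨c₁, hc₁, hbc₁⟩ := hb₁'
  obtain ⟨u, hu, w, hw, huw, hbu, hbw⟩ :=
    exists_boundary_adj_of_connected_induce h₁.2.2.1 (G.Adj b₁) ha₁ hc₁ hba₁ hbc₁
  obtain ⟨a₂, ha₂, hba₂⟩ := hb₂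
  obtain ⟨c₂, hc₂, hbc₂⟩ := hb₂'
  obtain ⟨z, hz, z', hz', hzz', hbz, hbz'⟩ :=
    exists_boundary_adj_of_connected_induce h₂.2.2.1 (G.Adj b₂) ha₂ hc₂ hba₂ hbc₂
  have hQ₁₂ : ∀ x ∈ Q₁, ∀ y ∈ Q₂, ¬ G.Adj x y := fun x hx y hy hxy =>
    hb₁Q₂ u (h₁.eq_of_adj h₂ hx hy hxy ▸ hu) hbu
  exact hG.false_of_induced_path_s9 huw.symm hbu.symm hb hbz hzz' (fun h => hbw h.symm)
    (fun h => hb₂Q₁ w hw h.symm) (hQ₁₂ w hw z hz) (hQ₁₂ w hw z' hz')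
    (fun h => hb₂Q₁ u hu h.symm) (hQ₁₂ u hu z hz) (hQ₁₂ u hu z' hz')
    (hb₁Q₂ z hz) (hb₁Q₂ z' hz') hbz'

lemma exists_distLevel_two_adj_of_isCompOf {v : V} {Q : Set V}
    (hQ : IsCompOf G (distLevel G v 3 ∪ distLevel G v 4) Q) :
    ∃ x ∈ distLevel G v 2, ∃ y ∈ Q, G.Adj x y := by
  obtain ⟨hQS, ⟨y, hy⟩, -, hQclosed⟩ := hQ
  have h₃ : ∃ y ∈ Q, G.dist v y = 3 := by
    rcases hQS hy with hy₃ | hy₄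
    · exact ⟨y, hy, hy₃⟩
    · obtain ⟨x, hxy, hx⟩ := exists_adj_dist_eq_of_dist_eq_succ (k := 3) hy₄
      exact ⟨x, hQclosed y hy x (Or.inl hx) hxy.symm, hx⟩
  obtain ⟨y, hy, hy₃⟩ := h₃
  obtain ⟨x, hxy, hx⟩ := exists_adj_dist_eq_of_dist_eq_succ (k := 2) hy₃
  exact ⟨x, hx, y, hy, hxy⟩

end

theorem stmt_9_general {V : Type*} [Fintype V] (G : SimpleGraph V)
    (hP6 : P6Free G) (v : V) (hclique : G.IsClique (distLevel G v 2))
    (hdist : ∀ x ∈ distLevel G v 2, ∀ Q : Set V,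
      IsCompOf G (distLevel G v 3 ∪ distLevel G v 4) Q → ¬ G.IsClique Q →
      (∃ y ∈ Q, G.Adj x y) → ∃ y ∈ Q, ¬ G.Adj x y)
    (hex : ∃ Q : Set V,
      IsCompOf G (distLevel G v 3 ∪ distLevel G v 4) Q ∧ ¬ G.IsClique Q) :
    ∃ b ∈ distLevel G v 2, ∀ Q : Set V,
      IsCompOf G (distLevel G v 3 ∪ distLevel G v 4) Q → ¬ G.IsClique Q →
      ∃ y ∈ Q, G.Adj b y := by
  let contacted (b : V) : Set (Set V) :=
    {Q | IsCompOf G (distLevel G v 3 ∪ distLevel G v 4) Q ∧ ¬ G.IsClique Q ∧ ∃ y ∈ Q, G.Adj b y}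
  obtain ⟨Q₀, hQ₀, -⟩ := hex
  obtain ⟨x₀, hx₀, -⟩ := exists_distLevel_two_adj_of_isCompOf hQ₀
  obtain ⟨b, hb, hmax⟩ :=
    (Set.toFinite (distLevel G v 2)).exists_maximalFor contacted _ ⟨x₀, hx₀⟩
  refine ⟨b, hb, fun Q hQ hQnc => ?_⟩
  by_contra hbQ
  obtain ⟨b', hb', hb'Q⟩ := exists_distLevel_two_adj_of_isCompOf hQ
  have hbb' : G.Adj b b' := hclique hb hb' (by rintro rfl; exact hbQ hb'Q)
  have hsub : contacted b ⊆ contacted b' := fun Q' ⟨hQ', hQ'nc, hbQ'⟩ =>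
    ⟨hQ', hQ'nc, hP6.exists_adj_of_isCompOf_of_adj hQ' hQ hbb' hbQ'
      (hdist b hb Q' hQ' hQ'nc hbQ') hbQ hb'Q (hdist b' hb' Q hQ hQnc hb'Q)⟩
  exact hbQ (hmax hb' hsub ⟨hQ, hQnc, hb'Q⟩).2.2

/-- In a finite connected `P₆`-free graph in which `N₂(v)` is a clique, if every vertex
of `N₂(v)` contacting a non-clique component of `G[N₃(v) ∪ N₄(v)]` also has a
non-neighbor in it, and at least one component of `G[N₃(v) ∪ N₄(v)]` is not a clique,
then some vertex `b* ∈ N₂(v)` contacts every non-clique component of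
`G[N₃(v) ∪ N₄(v)]`. -/
theorem stmt_9 {V : Type*} [Fintype V] (G : SimpleGraph V) (hconn : G.Connected)
    (hP6 : P6Free G) (v : V) (hclique : G.IsClique (distLevel G v 2))
    (hdist : ∀ x ∈ distLevel G v 2, ∀ Q : Set V,
      IsCompOf G (distLevel G v 3 ∪ distLevel G v 4) Q → ¬ G.IsClique Q →
      (∃ y ∈ Q, G.Adj x y) → ∃ y ∈ Q, ¬ G.Adj x y)
    (hex : ∃ Q : Set V,
      IsCompOf G (distLevel G v 3 ∪ distLevel G v 4) Q ∧ ¬ G.IsClique Q) :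
    ∃ b ∈ distLevel G v 2, ∀ Q : Set V,
      IsCompOf G (distLevel G v 3 ∪ distLevel G v 4) Q → ¬ G.IsClique Q →
      ∃ y ∈ Q, G.Adj b y :=
  stmt_9_general G hP6 v hclique hdist hex
end

section
/- Let G be a finite connected P6-free graph, v a vertex of G, D an efficient dominating set of G with v ∈ D, b* ∈ N_2(v), and q* ∈ D ∩ N_3(v) the unique vertex of D adjacent to b* (i.e., D ∩ N[b*] = {q*}). Let Q_1 be the connected component of the induced subgraph G[N_3(v) ∪ N_4(v)] containing q*, and set Z = N[q*] ∩ Q_1, W = (N(b*) ∩ Q_1) \ Z, and Y = Q_1 \ (Z ∪ W). Then every connected component K of the induced subgraph G[Y] satisfies |K ∩ D| = 1, and the unique vertex of K ∩ D is universal for K, i.e., adjacent to every other vertex of K. -/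
open SimpleGraph

/-! Vertices of `D` avoid `N₂(v)`, since a vertex of `N₁(v)` would be dominated twice, and
`N₅(v)` is empty, since a geodesic from `v` would contain an induced `P₆`. Hence every vertex
of a component `K` of `G[Y]` is dominated from inside `K`. As `Q₁` is connected, some
`t ∈ Z ∪ W` has a neighbour in `K`. Prefixing a path `v a b*` to `q* t k` or to `t x y` with
`x, y ∈ K` yields an induced `P₆` unless `t` is a neighbour of `b*` adjacent to all of `K`.
Such a common neighbour is dominated by every vertex of `K ∩ D`, so `K ∩ D` is a single
vertex, and it dominates, hence is adjacent to, every other vertex of `K`. -/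

namespace SimpleGraph

variable {V : Type*} {G : SimpleGraph V}

lemma not_adj_of_dist_add_one_lt {v x y : V} (h : G.dist v x + 1 < G.dist v y) :
    ¬ G.Adj x y := fun hxy => by
  rcases hxy.diff_dist_adj (u := v) with h' | h' | h' <;> omega

lemma Walk.dist_getVert_of_length_eq_dist {u w : V} (p : G.Walk u w)
    (hp : p.length = G.dist u w) (n : ℕ) : G.dist u (p.getVert n) = min n p.length := by
  rw [← length_eq_dist_of_subwalk hp (p.isSubwalk_take n), Walk.take_length]

lemma exists_adj_of_induce_connected {Q K : Set V} (hQ : (G.induce Q).Connected)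
    {x y : V} (hx : x ∈ Q ∩ K) (hy : y ∈ Q \ K) : ∃ a ∈ Q ∩ K, ∃ b ∈ Q \ K, G.Adj a b := by
  obtain ⟨p⟩ := hQ.preconnected ⟨x, hx.1⟩ ⟨y, hy.1⟩
  obtain ⟨d, -, hd₁, hd₂⟩ := p.exists_boundary_dart (Subtype.val ⁻¹' K) hx.2 hy.2
  exact ⟨d.fst, ⟨d.fst.2, hd₁⟩, d.snd, ⟨d.snd.2, hd₂⟩, d.adj⟩

end SimpleGraph

namespace P6Free

variable {V : Type*} {G : SimpleGraph V}

/-- Distinct vertices of `P₆` have distinct neighbourhoods, so a map realising the adjacency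
pattern of `P₆` is automatically injective. -/
lemma false_of_forall_adj_iff (hP6 : P6Free G) (f : Fin 6 → V)
    (hf : ∀ i j : Fin 6, G.Adj (f i) (f j) ↔ ((i : ℕ) + 1 = j ∨ (j : ℕ) + 1 = i)) : False := by
  have hsep : ∀ i j : Fin 6, i ≠ j → ∃ k : Fin 6,
      ¬ (((i : ℕ) + 1 = k ∨ (k : ℕ) + 1 = i) ↔ ((j : ℕ) + 1 = k ∨ (k : ℕ) + 1 = j)) := by
    decide
  refine hP6 ⟨⟨f, fun i j hij => by_contra fun hne => ?_⟩, hf⟩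
  obtain ⟨k, hk⟩ := hsep i j hne
  exact hk ((hf i k).symm.trans (hij ▸ hf j k))

lemma false_of_path (hP6 : P6Free G) {x₀ x₁ x₂ x₃ x₄ x₅ : V}
    (h01 : G.Adj x₀ x₁) (h12 : G.Adj x₁ x₂) (h23 : G.Adj x₂ x₃) (h34 : G.Adj x₃ x₄)
    (h45 : G.Adj x₄ x₅) (h02 : ¬ G.Adj x₀ x₂) (h03 : ¬ G.Adj x₀ x₃) (h04 : ¬ G.Adj x₀ x₄)
    (h05 : ¬ G.Adj x₀ x₅) (h13 : ¬ G.Adj x₁ x₃) (h14 : ¬ G.Adj x₁ x₄) (h15 : ¬ G.Adj x₁ x₅)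
    (h24 : ¬ G.Adj x₂ x₄) (h25 : ¬ G.Adj x₂ x₅) (h35 : ¬ G.Adj x₃ x₅) : False := by
  refine hP6.false_of_forall_adj_iff ![x₀, x₁, x₂, x₃, x₄, x₅] fun i j => ?_
  fin_cases i <;> fin_cases j <;>
    simp [h01, h12, h23, h34, h45, h02, h03, h04, h05, h13, h14, h15, h24, h25, h35,
      h01.symm, h12.symm, h23.symm, h34.symm, h45.symm, G.adj_comm x₅, G.adj_comm x₄,
      G.adj_comm x₃, G.adj_comm x₂]

lemma dist_lt_five (hP6 : P6Free G) (v u : V) : G.dist v u < 5 := by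
  by_contra! h5
  obtain ⟨p, hp⟩ := exists_walk_of_dist_ne_zero (G := G) (u := v) (v := u) (by omega)
  have hdist (i : Fin 6) : G.dist v (p.getVert i) = i := by
    rw [p.dist_getVert_of_length_eq_dist hp]; omega
  refine hP6.false_of_forall_adj_iff (fun i => p.getVert i) fun i j => ⟨fun hij => ?_, ?_⟩
  · have hne : i ≠ j := fun h => hij.ne (by rw [h])
    have := Fin.val_ne_of_ne hne
    rcases hij.diff_dist_adj (u := v) with h | h | h <;> simp only [hdist] at h <;> omega
  · rintro (h | h)
    · simpa [← h] using p.adj_getVert_succ (i := i) (by omega)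
    · simpa [← h] using (p.adj_getVert_succ (i := j) (by omega)).symm

lemma false_of_path_of_dist_eq_two (hP6 : P6Free G) {v b x y z : V} (hb : G.dist v b = 2)
    (hbx : G.Adj b x) (hxy : G.Adj x y) (hyz : G.Adj y z)
    (hx : 3 ≤ G.dist v x) (hy : 3 ≤ G.dist v y) (hz : 3 ≤ G.dist v z)
    (hby : ¬ G.Adj b y) (hbz : ¬ G.Adj b z) (hxz : ¬ G.Adj x z) : False := by
  obtain ⟨p, hp⟩ := exists_walk_of_dist_ne_zero (G := G) (u := v) (v := b) (by omega)
  have hva : G.Adj v (p.getVert 1) := by simpa using p.adj_getVert_succ (i := 0) (by omega)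
  have hab : G.Adj (p.getVert 1) b := by
    simpa [show 1 + 1 = p.length by omega] using p.adj_getVert_succ (i := 1) (by omega)
  have hv : G.dist v v = 0 := dist_self
  have ha : G.dist v (p.getVert 1) = 1 := dist_eq_one_iff_adj.mpr hva
  have gap {x y : V} : G.dist v x + 1 < G.dist v y → ¬ G.Adj x y := not_adj_of_dist_add_one_lt
  exact hP6.false_of_path hva hab hbx hxy hyz (gap (by omega)) (gap (by omega)) (gap (by omega))
    (gap (by omega)) (gap (by omega)) (gap (by omega)) (gap (by omega)) hby hbz hxz

end P6Free

namespace IsEDS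

variable {V : Type*} {G : SimpleGraph V} {D : Set V}

lemma eq_of_dominate (hD : IsEDS G D) {u d₁ d₂ : V} (hd₁ : d₁ ∈ D) (hd₂ : d₂ ∈ D)
    (h₁ : d₁ = u ∨ G.Adj d₁ u) (h₂ : d₂ = u ∨ G.Adj d₂ u) : d₁ = d₂ :=
  (hD u).unique ⟨hd₁, h₁⟩ ⟨hd₂, h₂⟩

lemma not_adj (hD : IsEDS G D) {d₁ d₂ : V} (hd₁ : d₁ ∈ D) (hd₂ : d₂ ∈ D) : ¬ G.Adj d₁ d₂ :=
  fun h => h.ne (hD.eq_of_dominate hd₁ hd₂ (.inr h) (.inl rfl))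

lemma dist_ne_two (hD : IsEDS G D) {d₁ d₂ : V} (hd₁ : d₁ ∈ D) (hd₂ : d₂ ∈ D) :
    G.dist d₁ d₂ ≠ 2 := fun h => by
  have hreach := Reachable.of_dist_ne_zero (G := G) (u := d₁) (v := d₂) (by omega)
  have h2 : G.edist d₁ d₂ = 2 := by rw [← hreach.coe_dist_eq_edist, h]; rfl
  obtain ⟨u, hu₁, hu₂⟩ := (edist_eq_two_iff.mp h2).2.2
  have : d₁ = d₂ := hD.eq_of_dominate hd₁ hd₂ (.inr hu₁) (.inr hu₂)
  simp [this] at h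

lemma exists_universal_of_common_neighbor (hD : IsEDS G D) {K : Set V} (hK : K.Nonempty)
    (hdom : ∀ y ∈ K, ∃ d ∈ K ∩ D, d = y ∨ G.Adj d y) {t : V} (ht : ∀ k ∈ K, G.Adj t k) :
    ∃ q : V, K ∩ D = {q} ∧ ∀ y ∈ K, y ≠ q → G.Adj q y := by
  have hsub : (K ∩ D).Subsingleton := fun d₁ h₁ d₂ h₂ =>
    hD.eq_of_dominate h₁.2 h₂.2 (.inr (ht d₁ h₁.1).symm) (.inr (ht d₂ h₂.1).symm)
  obtain ⟨y₀, hy₀⟩ := hK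
  obtain ⟨q, hq, -⟩ := hdom y₀ hy₀
  refine ⟨q, hsub.eq_singleton_of_mem hq, fun y hy hyq => ?_⟩
  obtain ⟨d, hd, hdy⟩ := hdom y hy
  rw [hsub hd hq] at hdy
  exact hdy.resolve_left (Ne.symm hyq)

end IsEDS

section Levels

variable {V : Type*} {G : SimpleGraph V} {v : V}

lemma three_le_dist_of_mem_levels {x : V} (hx : x ∈ distLevel G v 3 ∪ distLevel G v 4) :
    3 ≤ G.dist v x ∧ G.dist v x ≤ 4 := by
  rcases hx with h | h <;> simp only [distLevel, Set.mem_ofPred_eq] at h <;> omega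

lemma IsEDS.dominator_mem_levels {D : Set V} (hP6 : P6Free G) (hD : IsEDS G D) (hv : v ∈ D)
    {y d : V} (hy : y ∈ distLevel G v 3 ∪ distLevel G v 4) (hd : d ∈ D)
    (hdy : d = y ∨ G.Adj d y) : d ∈ distLevel G v 3 ∪ distLevel G v 4 := by
  rcases hdy with rfl | hdy
  · exact hy
  have := three_le_dist_of_mem_levels hy
  have := hD.dist_ne_two hv hd
  have := hP6.dist_lt_five v d
  simp only [distLevel, Set.mem_union, Set.mem_ofPred_eq]
  rcases hdy.symm.diff_dist_adj (u := v) with h | h | h <;> omega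

lemma IsEDS.dominator_mem_diff {D : Set V} (hP6 : P6Free G) (hD : IsEDS G D) (hv : v ∈ D)
    {b q : V} (hqD : q ∈ D) (hbD : D ∩ G.neighborSet b ⊆ {q}) {Q : Set V}
    (hQ : IsCompOf G (distLevel G v 3 ∪ distLevel G v 4) Q) {y d : V}
    (hy : y ∈ Q \ (insert q (G.neighborSet q) ∪ G.neighborSet b)) (hd : d ∈ D)
    (hdy : d = y ∨ G.Adj d y) : d ∈ Q \ (insert q (G.neighborSet q) ∪ G.neighborSet b) := by
  have hdQ : d ∈ Q := by
    rcases hdy with rfl | hdy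
    · exact hy.1
    · exact hQ.2.2.2 y hy.1 d (hD.dominator_mem_levels hP6 hv (hQ.1 hy.1) hd (.inr hdy)) hdy.symm
  have hdq : d ≠ q := by
    rintro rfl
    exact hy.2 (.inl (hdy.imp Eq.symm id))
  refine ⟨hdQ, ?_⟩
  rintro ((h | h) | h)
  · exact hdq h
  · exact hD.not_adj hqD hd h
  · exact hdq (hbD ⟨hd, h⟩)

lemma IsEDS.exists_dominator_mem_of_isCompOf {D : Set V} (hP6 : P6Free G) (hD : IsEDS G D)
    (hv : v ∈ D) {b q : V} (hqD : q ∈ D) (hbD : D ∩ G.neighborSet b ⊆ {q}) {Q : Set V}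
    (hQ : IsCompOf G (distLevel G v 3 ∪ distLevel G v 4) Q) {K : Set V}
    (hK : IsCompOf G (Q \ (insert q (G.neighborSet q) ∪ G.neighborSet b)) K) :
    ∀ y ∈ K, ∃ d ∈ K ∩ D, d = y ∨ G.Adj d y := by
  intro y hy
  obtain ⟨d, ⟨hd, hdy⟩, -⟩ := hD y
  refine ⟨d, ⟨?_, hd⟩, hdy⟩
  rcases hdy with rfl | hdy
  · exact hy
  · exact hK.2.2.2 y hy d (hD.dominator_mem_diff hP6 hv hqD hbD hQ (hK.1 hy) hd (.inr hdy))
      hdy.symm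

lemma exists_adj_adj_of_isCompOf_diff (hP6 : P6Free G) {b q : V} (hb : G.dist v b = 2)
    (hbq : G.Adj b q) (hq : G.dist v q = 3) {Q : Set V}
    (hQ : IsCompOf G (distLevel G v 3 ∪ distLevel G v 4) Q) (hqQ : q ∈ Q) {K : Set V}
    (hK : IsCompOf G (Q \ (insert q (G.neighborSet q) ∪ G.neighborSet b)) K) :
    ∃ t ∈ Q, G.Adj b t ∧ ∃ k ∈ K, G.Adj t k := by
  obtain ⟨hKY, ⟨k₀, hk₀⟩, -, hKcl⟩ := hK
  have hKQ : K ⊆ Q := hKY.trans Set.sdiff_subset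
  have hqK : q ∉ K := fun h => (hKY h).2 (.inl (Set.mem_insert _ _))
  obtain ⟨k, ⟨-, hk⟩, t, ⟨htQ, htK⟩, hkt⟩ :=
    exists_adj_of_induce_connected hQ.2.2.1 ⟨hKQ hk₀, hk₀⟩ ⟨hqQ, hqK⟩
  have htY : t ∈ insert q (G.neighborSet q) ∪ G.neighborSet b :=
    by_contra fun h => htK (hKcl k hk t ⟨htQ, h⟩ hkt)
  have hkY := (hKY hk).2
  refine ⟨t, htQ, ?_, k, hk, hkt.symm⟩
  by_contra hbt
  -- otherwise `v a b q t k` is an induced `P₆`, `a` a common neighbour of `v` and `b`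
  have hqt : G.Adj q t := by
    rcases htY with (rfl | h) | h
    · exact absurd (.inl (.inr hkt.symm)) hkY
    · exact h
    · exact absurd h hbt
  exact hP6.false_of_path_of_dist_eq_two hb hbq hqt hkt.symm (by omega)
    (three_le_dist_of_mem_levels (hQ.1 htQ)).1 (three_le_dist_of_mem_levels (hQ.1 (hKQ hk))).1
    hbt (hkY ∘ .inr) (hkY ∘ .inl ∘ .inr)

end Levels

lemma P6Free.adj_of_induce_connected {V : Type*} {G : SimpleGraph V} (hP6 : P6Free G)
    {v b t : V} (hb : G.dist v b = 2) (hbt : G.Adj b t) (ht : 3 ≤ G.dist v t) {K : Set V}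
    (hK : (G.induce K).Connected) (hKb : ∀ k ∈ K, ¬ G.Adj b k)
    (hK3 : ∀ k ∈ K, 3 ≤ G.dist v k) {k₁ : V} (hk₁ : k₁ ∈ K) (htk₁ : G.Adj t k₁) :
    ∀ k ∈ K, G.Adj t k := by
  intro k hk
  by_contra htk
  obtain ⟨x, ⟨hxK, htx⟩, y, ⟨hyK, hty⟩, hxy⟩ :=
    exists_adj_of_induce_connected (K := {x | G.Adj t x}) hK ⟨hk₁, htk₁⟩ ⟨hk, htk⟩
  exact hP6.false_of_path_of_dist_eq_two hb hbt htx hxy ht (hK3 x hxK) (hK3 y hyK)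
    (hKb x hxK) (hKb y hyK) hty

theorem stmt_12_general {V : Type*} (G : SimpleGraph V)
    (hP6 : P6Free G) (D : Set V) (hD : IsEDS G D) (v : V) (hv : v ∈ D)
    (bstar : V) (hb : bstar ∈ distLevel G v 2)
    (qstar : V) (hq : qstar ∈ D ∩ distLevel G v 3)
    (huniq : D ∩ insert bstar (G.neighborSet bstar) = {qstar})
    (Q₁ : Set V) (hQ₁ : IsCompOf G (distLevel G v 3 ∪ distLevel G v 4) Q₁)
    (hqQ : qstar ∈ Q₁)
    (Z W Y : Set V)
    (hZ : Z = insert qstar (G.neighborSet qstar) ∩ Q₁)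
    (hW : W = (G.neighborSet bstar ∩ Q₁) \ Z)
    (hY : Y = Q₁ \ (Z ∪ W)) :
    ∀ K : Set V, IsCompOf G Y K →
      ∃ q : V, K ∩ D = {q} ∧ ∀ y ∈ K, y ≠ q → G.Adj q y := by
  intro K hK
  have hY' : Y = Q₁ \ (insert qstar (G.neighborSet qstar) ∪ G.neighborSet bstar) := by
    subst hY hW hZ
    ext
    simp only [Set.mem_sdiff, Set.mem_union, Set.mem_inter_iff]
    tauto
  rw [hY'] at hK
  have hbD : D ∩ G.neighborSet bstar ⊆ {qstar} :=
    huniq ▸ Set.inter_subset_inter_right D (Set.subset_insert _ _)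
  have hbq : G.Adj bstar qstar := by
    have hq' : qstar ∈ D ∩ insert bstar (G.neighborSet bstar) := huniq ▸ rfl
    refine hq'.2.resolve_left fun h => ?_
    have h2 : G.dist v bstar = 2 := hb
    have h3 : G.dist v qstar = 3 := hq.2
    rw [h] at h3
    omega
  obtain ⟨t, htQ, hbt, k, hk, htk⟩ :=
    exists_adj_adj_of_isCompOf_diff hP6 hb hbq hq.2 hQ₁ hqQ hK
  have hdom := hD.exists_dominator_mem_of_isCompOf hP6 hv hq.1 hbD hQ₁ hK
  have hKt := hP6.adj_of_induce_connected hb hbt (three_le_dist_of_mem_levels (hQ₁.1 htQ)).1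
    hK.2.2.1 (fun x hx => (hK.1 hx).2 ∘ .inr)
    (fun x hx => (three_le_dist_of_mem_levels (hQ₁.1 (hK.1 hx).1)).1) hk htk
  exact hD.exists_universal_of_common_neighbor ⟨k, hk⟩ hdom hKt

/-- Setup as before. Every connected component `K` of `G[Y]` satisfies `|K ∩ D| = 1`,
and the unique vertex of `K ∩ D` is universal for `K`. -/
theorem stmt_12 {V : Type*} [Fintype V] (G : SimpleGraph V) (hconn : G.Connected)
    (hP6 : P6Free G) (D : Set V) (hD : IsEDS G D) (v : V) (hv : v ∈ D)
    (bstar : V) (hb : bstar ∈ distLevel G v 2)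
    (qstar : V) (hq : qstar ∈ D ∩ distLevel G v 3)
    (huniq : D ∩ insert bstar (G.neighborSet bstar) = {qstar})
    (Q₁ : Set V) (hQ₁ : IsCompOf G (distLevel G v 3 ∪ distLevel G v 4) Q₁)
    (hqQ : qstar ∈ Q₁)
    (Z W Y : Set V)
    (hZ : Z = insert qstar (G.neighborSet qstar) ∩ Q₁)
    (hW : W = (G.neighborSet bstar ∩ Q₁) \ Z)
    (hY : Y = Q₁ \ (Z ∪ W)) :
    ∀ K : Set V, IsCompOf G Y K →
      ∃ q : V, K ∩ D = {q} ∧ ∀ y ∈ K, y ≠ q → G.Adj q y :=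
  stmt_12_general G hP6 D hD v hv bstar hb qstar hq huniq Q₁ hQ₁ hqQ Z W Y hZ hW hY
end

section
/- In the unipolar setting, assume additionally that G has an efficient dominating set D with D ∩ B = ∅. Then for all b_1, b_2 ∈ B, there are at most two indices i ∈ {1,…,k} such that b_1 and b_2 cover A_i. -/
open SimpleGraph

/-- The unipolar setting: the vertex set of `G` is partitioned into `A` and `B`, `B` is
a clique, the connected components `A₁, …, A_k` of `G[A]` (enumerated by `comps`) are
cliques each with at least two vertices, every `b ∈ B` having a neighbor in some
component also has a non-neighbor in it, and the crossing condition (which holds in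
particular when `G` is `P₆`-free) is satisfied. -/
structure UnipolarSetting (V : Type*) where
  G : SimpleGraph V
  A : Set V
  B : Set V
  k : ℕ
  comps : Fin k → Set V
  cover_univ : A ∪ B = Set.univ
  disjointAB : A ∩ B = ∅
  B_clique : G.IsClique B
  comps_isComp : ∀ i, IsCompOf G A (comps i)
  comps_inj : Function.Injective comps
  comps_all : ∀ Q : Set V, IsCompOf G A Q → ∃ i, Q = comps i
  comps_clique : ∀ i, G.IsClique (comps i)
  comps_nontrivial : ∀ i, ∃ x ∈ comps i, ∃ y ∈ comps i, x ≠ y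
  distinguishes : ∀ b ∈ B, ∀ i, (∃ x ∈ comps i, G.Adj b x) →
    ∃ x ∈ comps i, ¬ G.Adj b x
  crossing : ∀ (i j : Fin k), i ≠ j → ∀ b₁ ∈ B, ∀ b₂ ∈ B,
    ∀ x₁ ∈ comps i, ∀ x₂ ∈ comps i, ∀ y₁ ∈ comps j, ∀ y₂ ∈ comps j,
    G.Adj x₁ x₂ → G.Adj y₁ y₂ →
    G.Adj b₁ x₁ → ¬ G.Adj b₁ x₂ → G.Adj b₂ y₁ → ¬ G.Adj b₂ y₂ →
    (G.Adj b₂ x₁ ∨ G.Adj b₂ x₂ ∨ G.Adj b₁ y₁ ∨ G.Adj b₁ y₂)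

/-- `b₂` overtakes `b₁` for the component `A_i`: there is an edge `yz` inside `A_i` with
`y, z` both non-adjacent to `b₁` and with `b₂` adjacent to `y` but not to `z`. -/
def Overtakes {V : Type*} (U : UnipolarSetting V) (b₁ b₂ : V) (i : Fin U.k) : Prop :=
  ∃ y ∈ U.comps i, ∃ z ∈ U.comps i, U.G.Adj y z ∧
    ¬ U.G.Adj b₁ y ∧ ¬ U.G.Adj b₁ z ∧ U.G.Adj b₂ y ∧ ¬ U.G.Adj b₂ z

/-- `b₂` includes `b₁` for `A_i`: `N(b₁) ∩ A_i ⊆ N(b₂) ∩ A_i`. -/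
def Includes {V : Type*} (U : UnipolarSetting V) (b₁ b₂ : V) (i : Fin U.k) : Prop :=
  U.G.neighborSet b₁ ∩ U.comps i ⊆ U.G.neighborSet b₂ ∩ U.comps i

/-- `b₁` and `b₂` cover `A_i`: `A_i ⊆ N(b₁) ∪ N(b₂)`. -/
def Covers {V : Type*} (U : UnipolarSetting V) (b₁ b₂ : V) (i : Fin U.k) : Prop :=
  U.comps i ⊆ U.G.neighborSet b₁ ∪ U.G.neighborSet b₂

private lemma walk_mem_aux {V : Type*} {G : SimpleGraph V} {S Q₁ Q₂ : Set V}
    (hQS : Q₁ ⊆ S) (hclose : ∀ x ∈ Q₂, ∀ y ∈ S, G.Adj x y → y ∈ Q₂) :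
    ∀ {u v : Q₁} (_ : (G.induce Q₁).Walk u v), (u : V) ∈ Q₂ → (v : V) ∈ Q₂ := by
  intro u v w
  induction w with
  | nil => exact id
  | cons h p ih =>
    rename_i a b c
    intro ha
    exact ih (hclose a ha b (hQS b.2) h)

private lemma comp_subset_of_mem_s14 {V : Type*} {G : SimpleGraph V} {S Q₁ Q₂ : Set V}
    (h₁ : IsCompOf G S Q₁) (h₂ : IsCompOf G S Q₂) {x : V} (hx₁ : x ∈ Q₁) (hx₂ : x ∈ Q₂) :
    Q₁ ⊆ Q₂ := by
  intro y hy
  obtain ⟨w⟩ := h₁.2.2.1 ⟨x, hx₁⟩ ⟨y, hy⟩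
  exact walk_mem_aux h₁.1 h₂.2.2.2 w hx₂

/-- In the unipolar setting, if `G` has an efficient dominating set `D` with
`D ∩ B = ∅`, then for all `b₁, b₂ ∈ B` there are at most two indices `i` such that
`b₁` and `b₂` cover `A_i`. -/
theorem stmt_14 {V : Type*} [Fintype V] (U : UnipolarSetting V)
    (D : Set V) (hD : IsEDS U.G D) (hDB : D ∩ U.B = ∅)
    (b₁ : V) (hb₁ : b₁ ∈ U.B) (b₂ : V) (hb₂ : b₂ ∈ U.B) :
    ({i : Fin U.k | Covers U b₁ b₂ i}).ncard ≤ 2 := by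
  classical
  -- D avoids B, so D ⊆ A
  have hDnB : ∀ d ∈ D, d ∈ U.A := by
    intro d hd
    have hdu : d ∈ U.A ∪ U.B := by rw [U.cover_univ]; trivial
    rcases hdu with h | h
    · exact h
    · exact absurd (Set.mem_inter hd h) (by rw [hDB]; exact Set.notMem_empty d)
  -- each component contains a D-vertex
  have hA : ∀ i : Fin U.k, ∃ a, a ∈ D ∧ a ∈ U.comps i := by
    intro i
    obtain ⟨x, hx⟩ := (U.comps_isComp i).2.1
    obtain ⟨d, ⟨hdD, hdx⟩, _⟩ := hD x
    refine ⟨d, hdD, ?_⟩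
    rcases hdx with rfl | hadj
    · exact hx
    · exact (U.comps_isComp i).2.2.2 x hx d (hDnB d hdD) hadj.symm
  choose g hgD hgC using hA
  obtain ⟨d₁, ⟨hd₁D, hd₁⟩, huniq₁⟩ := hD b₁
  obtain ⟨d₂, ⟨hd₂D, hd₂⟩, huniq₂⟩ := hD b₂
  set S : Set (Fin U.k) := {i | Covers U b₁ b₂ i} with hS
  have hsub : S ⊆ g ⁻¹' {d₁, d₂} := by
    intro i hi
    have := hi
    rw [hS, Set.mem_setOf_eq] at this
    have hgi := this (hgC i)
    rcases hgi with h | h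
    · exact Or.inl (huniq₁ (g i) ⟨hgD i, Or.inr ((SimpleGraph.mem_neighborSet _ _ _).mp h).symm⟩)
    · exact Or.inr (huniq₂ (g i) ⟨hgD i, Or.inr ((SimpleGraph.mem_neighborSet _ _ _).mp h).symm⟩)
  have hinj : Set.InjOn g S := by
    intro i _ j _ hij
    apply U.comps_inj
    apply Set.Subset.antisymm
    · exact comp_subset_of_mem_s14 (U.comps_isComp i) (U.comps_isComp j) (hgC i) (hij ▸ hgC j)
    · exact comp_subset_of_mem_s14 (U.comps_isComp j) (U.comps_isComp i) (hgC j) (hij ▸ hgC i)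
  calc S.ncard = (g '' S).ncard := (Set.ncard_image_of_injOn hinj).symm
    _ ≤ ({d₁, d₂} : Set V).ncard := by
        apply Set.ncard_le_ncard _ (Set.toFinite _)
        exact Set.image_subset_iff.mpr hsub
    _ ≤ 2 := by
        refine le_trans (Set.ncard_insert_le _ _) ?_
        simp
end

section
/- In the unipolar setting, assume additionally that G has an efficient dominating set D with D ∩ B = ∅, and let b_1, b_2 ∈ B be such that b_2 overtakes b_1 for A_i. Then there are at most two indices m ≠ i for which b_2 does not include b_1 for A_m, and for each such index m, b_1 and b_2 cover A_m; in other words, b_1 and b_2 cover at most two components A_j, A_ℓ with j, ℓ ≠ i, and b_2 includes b_1 for all remaining components. -/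
open SimpleGraph

/-- Distinct components (as sets) coincide if they share a vertex. -/
lemma comps_eq_of_mem {V : Type*} (U : UnipolarSetting V) {m₁ m₂ : Fin U.k} {x : V}
    (h1 : x ∈ U.comps m₁) (h2 : x ∈ U.comps m₂) : m₁ = m₂ := by
  have key : ∀ (a b : Fin U.k), ∀ y, y ∈ U.comps a → y ∈ U.comps b →
      U.comps a ⊆ U.comps b := by
    intro a b y hya hyb z hz
    obtain ⟨hsub_a, _, hconn, _⟩ := U.comps_isComp a
    obtain ⟨_, _, _, hclose_b⟩ := U.comps_isComp b
    obtain ⟨p⟩ := hconn ⟨y, hya⟩ ⟨z, hz⟩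
    have : ∀ {u v : U.comps a} (_ : (U.G.induce (U.comps a)).Walk u v),
        (u : V) ∈ U.comps b → (v : V) ∈ U.comps b := by
      intro u v p
      induction p with
      | nil => exact fun h => h
      | cons hadj p ih =>
        intro hu
        apply ih
        exact hclose_b _ hu _ (hsub_a (Subtype.mem _)) hadj
    exact this p hyb
  exact U.comps_inj (Set.Subset.antisymm (key _ _ x h1 h2) (key _ _ x h2 h1))

lemma cover_of_not_includes {V : Type*} (U : UnipolarSetting V) {b₁ b₂ : V}
    (hb₁ : b₁ ∈ U.B) (hb₂ : b₂ ∈ U.B) {i : Fin U.k} (h : Overtakes U b₁ b₂ i)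
    {m : Fin U.k} (hmi : m ≠ i) (hni : ¬ Includes U b₁ b₂ m) :
    Covers U b₁ b₂ m := by
  obtain ⟨y, hy, z, hz, hyz, h1y, h1z, h2y, h2z⟩ := h
  rw [Includes, Set.not_subset] at hni
  obtain ⟨x₁, hx₁, hx₁'⟩ := hni
  obtain ⟨hadj₁, hx₁m⟩ := hx₁
  rw [SimpleGraph.mem_neighborSet] at hadj₁
  have hnadj₂ : ¬ U.G.Adj b₂ x₁ := by
    intro hc
    exact hx₁' ⟨hc, hx₁m⟩
  intro v hv
  by_cases hbv : U.G.Adj b₁ v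
  · exact Or.inl hbv
  · right
    have hne : x₁ ≠ v := fun he => hbv (he ▸ hadj₁)
    have hx₁v : U.G.Adj x₁ v := U.comps_clique m hx₁m hv hne
    have := U.crossing m i hmi b₁ hb₁ b₂ hb₂ x₁ hx₁m v hv y hy z hz
      hx₁v hyz hadj₁ hbv h2y h2z
    rcases this with hc | hc | hc | hc
    · exact absurd hc hnadj₂
    · exact hc
    · exact absurd hc h1y
    · exact absurd hc h1z

/-- In the unipolar setting with an efficient dominating set `D`, `D ∩ B = ∅`: if `b₂`
overtakes `b₁` for `A_i`, then there are at most two indices `m ≠ i` for which `b₂`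
does not include `b₁` for `A_m`, and for each such index `m`, `b₁` and `b₂` cover
`A_m`. -/
theorem stmt_16 {V : Type*} [Fintype V] (U : UnipolarSetting V)
    (D : Set V) (hD : IsEDS U.G D) (hDB : D ∩ U.B = ∅)
    (b₁ : V) (hb₁ : b₁ ∈ U.B) (b₂ : V) (hb₂ : b₂ ∈ U.B)
    (i : Fin U.k) (h : Overtakes U b₁ b₂ i) :
    ({m : Fin U.k | m ≠ i ∧ ¬ Includes U b₁ b₂ m}).ncard ≤ 2 ∧
      ∀ m : Fin U.k, m ≠ i → ¬ Includes U b₁ b₂ m → Covers U b₁ b₂ m := by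
  classical
  have hDA : D ⊆ U.A := by
    intro d hd
    have : d ∈ U.A ∪ U.B := by rw [U.cover_univ]; trivial
    rcases this with hA | hB
    · exact hA
    · exact absurd (show d ∈ D ∩ U.B from ⟨hd, hB⟩) (by rw [hDB]; exact id)
  obtain ⟨d1, ⟨hd1D, _⟩, hd1uniq⟩ := hD b₁
  obtain ⟨d2, ⟨hd2D, _⟩, hd2uniq⟩ := hD b₂
  have hex : ∀ m : Fin U.k, ∃ d, d ∈ D ∧ d ∈ U.comps m := by
    intro m
    obtain ⟨hsub, ⟨x, hx⟩, _, hclose⟩ := U.comps_isComp m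
    obtain ⟨d, ⟨hdD, hdx⟩, _⟩ := hD x
    rcases hdx with rfl | hdx
    · exact ⟨d, hdD, hx⟩
    · exact ⟨d, hdD, hclose x hx d (hDA hdD) hdx.symm⟩
  choose f hfD hfmem using hex
  have hcov : ∀ m : Fin U.k, m ≠ i → ¬ Includes U b₁ b₂ m → Covers U b₁ b₂ m :=
    fun m hmi hni => cover_of_not_includes U hb₁ hb₂ h hmi hni
  refine ⟨?_, hcov⟩
  have hmap : ∀ m ∈ {m : Fin U.k | m ≠ i ∧ ¬ Includes U b₁ b₂ m},
      f m ∈ ({d1, d2} : Set V) := by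
    rintro m ⟨hmi, hni⟩
    have := hcov m hmi hni (hfmem m)
    rcases this with hadj | hadj
    · rw [SimpleGraph.mem_neighborSet] at hadj
      exact Or.inl (hd1uniq (f m) ⟨hfD m, Or.inr hadj.symm⟩)
    · rw [SimpleGraph.mem_neighborSet] at hadj
      exact Or.inr (hd2uniq (f m) ⟨hfD m, Or.inr hadj.symm⟩)
  have hinj : Set.InjOn f {m : Fin U.k | m ≠ i ∧ ¬ Includes U b₁ b₂ m} := by
    intro m₁ _ m₂ _ he
    exact comps_eq_of_mem U (hfmem m₁) (he ▸ hfmem m₂)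
  calc ({m : Fin U.k | m ≠ i ∧ ¬ Includes U b₁ b₂ m}).ncard
      ≤ ({d1, d2} : Set V).ncard :=
        Set.ncard_le_ncard_of_injOn f hmap hinj (Set.toFinite _)
    _ ≤ 2 := by
        calc ({d1, d2} : Set V).ncard ≤ ({d2} : Set V).ncard + 1 :=
              Set.ncard_insert_le _ _
          _ ≤ 2 := by simp
end

section
/- In the unipolar setting, for all b_1, b_2 ∈ B: if b_2 overtakes b_1 for A_i and b_2 overtakes b_1 for A_j with i ≠ j, then b_2 strictly includes b_1 for A_i and b_2 strictly includes b_1 for A_j, i.e., N(b_1) ∩ A_i ⊊ N(b_2) ∩ A_i and N(b_1) ∩ A_j ⊊ N(b_2) ∩ A_j. -/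
open SimpleGraph

lemma aux_ssub {V : Type*} (U : UnipolarSetting V)
    (b₁ : V) (hb₁ : b₁ ∈ U.B) (b₂ : V) (hb₂ : b₂ ∈ U.B)
    (i j : Fin U.k) (hij : i ≠ j)
    (hi : Overtakes U b₁ b₂ i) (hj : Overtakes U b₁ b₂ j) :
    U.G.neighborSet b₁ ∩ U.comps i ⊂ U.G.neighborSet b₂ ∩ U.comps i := by
  obtain ⟨y, hy, z, hz, hyz, hb1y, hb1z, hb2y, hb2z⟩ := hi
  obtain ⟨y', hy', z', hz', hyz', hb1y', hb1z', hb2y', hb2z'⟩ := hj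
  rw [Set.ssubset_def]
  constructor
  · rintro x ⟨hx1, hxi⟩
    refine ⟨?_, hxi⟩
    by_contra hb2x
    have hxz : x ≠ z := fun h => hb1z (h ▸ hx1)
    have hadj : U.G.Adj x z := U.comps_clique i hxi hz hxz
    have := U.crossing i j hij b₁ hb₁ b₂ hb₂ x hxi z hz y' hy' z' hz'
      hadj hyz' hx1 hb1z hb2y' hb2z'
    simp only [SimpleGraph.mem_neighborSet] at hb2x
    tauto
  · intro hsub
    exact hb1y (hsub ⟨hb2y, hy⟩).1

/-- In the unipolar setting, if `b₂` overtakes `b₁` for `A_i` and for `A_j` with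
`i ≠ j`, then `b₂` strictly includes `b₁` for both `A_i` and `A_j`. -/
theorem stmt_17 {V : Type*} [Fintype V] (U : UnipolarSetting V)
    (b₁ : V) (hb₁ : b₁ ∈ U.B) (b₂ : V) (hb₂ : b₂ ∈ U.B)
    (i j : Fin U.k) (hij : i ≠ j)
    (hi : Overtakes U b₁ b₂ i) (hj : Overtakes U b₁ b₂ j) :
    U.G.neighborSet b₁ ∩ U.comps i ⊂ U.G.neighborSet b₂ ∩ U.comps i ∧
      U.G.neighborSet b₁ ∩ U.comps j ⊂ U.G.neighborSet b₂ ∩ U.comps j := by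
  exact ⟨aux_ssub U b₁ hb₁ b₂ hb₂ i j hij hi hj,
    aux_ssub U b₁ hb₁ b₂ hb₂ j i hij.symm hj hi⟩
end

section
/- In the unipolar setting, assume additionally that G has an efficient dominating set D with D ∩ B = ∅. Define the relation → on B by: b_1 → b_2 if b_2 overtakes b_1 for at least three distinct components of G[A]. Then the directed graph H = (B, →) is a directed acyclic graph; i.e., there is no sequence b_1, …, b_h ∈ B with h ≥ 2 such that b_1 → b_2 → … → b_h → b_1. -/
open SimpleGraph

/-- `b₁ → b₂` : `b₂` overtakes `b₁` for at least three distinct components of `G[A]`. -/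
def Arrow {V : Type*} (U : UnipolarSetting V) (b₁ b₂ : V) : Prop :=
  ∃ i j l : Fin U.k, i ≠ j ∧ i ≠ l ∧ j ≠ l ∧
    Overtakes U b₁ b₂ i ∧ Overtakes U b₁ b₂ j ∧ Overtakes U b₁ b₂ l

section AuxLemmas

variable {V : Type*}

/-- A connected component is contained in any component it shares a vertex with. -/
lemma comp_subset_of_mem_s18 (G : SimpleGraph V) (S Q Q' : Set V)
    (hQ : IsCompOf G S Q) (hQ' : IsCompOf G S Q') {x : V}
    (hxQ : x ∈ Q) (hxQ' : x ∈ Q') : Q ⊆ Q' := by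
  obtain ⟨hQS, -, hconn, -⟩ := hQ
  obtain ⟨-, -, -, hcl⟩ := hQ'
  intro y hy
  obtain ⟨p⟩ := hconn.preconnected ⟨x, hxQ⟩ ⟨y, hy⟩
  have main : ∀ {u v : Q} (_ : (G.induce Q).Walk u v), (u : V) ∈ Q' → (v : V) ∈ Q' := by
    intro u v p
    induction p with
    | nil => exact id
    | @cons a c d hadj p ih =>
        intro hu
        exact ih (hcl (a : V) hu (c : V) (hQS c.2) hadj)
  exact main p hxQ'

lemma comps_disjoint' (U : UnipolarSetting V) {i j : Fin U.k} (hne : i ≠ j) {x : V}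
    (hxi : x ∈ U.comps i) (hxj : x ∈ U.comps j) : False := by
  apply hne
  apply U.comps_inj
  exact Set.Subset.antisymm
    (comp_subset_of_mem_s18 U.G U.A _ _ (U.comps_isComp i) (U.comps_isComp j) hxi hxj)
    (comp_subset_of_mem_s18 U.G U.A _ _ (U.comps_isComp j) (U.comps_isComp i) hxj hxi)

lemma D_subset_A (U : UnipolarSetting V) (D : Set V) (hDB : D ∩ U.B = ∅) : D ⊆ U.A := by
  intro d hd
  have hmem : d ∈ U.A ∪ U.B := by rw [U.cover_univ]; trivial
  rcases hmem with h | h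
  · exact h
  · have h2 : d ∈ D ∩ U.B := ⟨hd, h⟩
    rw [hDB] at h2
    exact absurd h2 (Set.notMem_empty d)

lemma exists_D_in_comp (U : UnipolarSetting V) (D : Set V) (hD : IsEDS U.G D)
    (hDB : D ∩ U.B = ∅) (i : Fin U.k) : ∃ d, d ∈ D ∧ d ∈ U.comps i := by
  obtain ⟨a, ha⟩ := (U.comps_isComp i).2.1
  obtain ⟨d, ⟨hdD, hdom⟩, -⟩ := hD a
  rcases hdom with rfl | hadj
  · exact ⟨d, hdD, ha⟩
  · have hdA : d ∈ U.A := D_subset_A U D hDB hdD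
    exact ⟨d, hdD, (U.comps_isComp i).2.2.2 a ha d hdA hadj.symm⟩

lemma D_adj_unique (U : UnipolarSetting V) (D : Set V) (hD : IsEDS U.G D)
    {u d d' : V} (hd : d ∈ D) (hd' : d' ∈ D)
    (h1 : U.G.Adj d u) (h2 : U.G.Adj d' u) : d = d' :=
  (hD u).unique ⟨hd, Or.inr h1⟩ ⟨hd', Or.inr h2⟩

/-- `b` is "blocked" at component `i` : the `D`-vertex of that component is adjacent
to `b`. Each `b` is blocked at most at one component. -/
def Blocked (U : UnipolarSetting V) (D : Set V) (b : V) (i : Fin U.k) : Prop :=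
  ∃ d, d ∈ D ∧ d ∈ U.comps i ∧ U.G.Adj d b

lemma blocked_unique (U : UnipolarSetting V) (D : Set V) (hD : IsEDS U.G D)
    {b : V} {i j : Fin U.k} (hne : i ≠ j)
    (hi : Blocked U D b i) (hj : Blocked U D b j) : False := by
  obtain ⟨d, hdD, hdi, hdb⟩ := hi
  obtain ⟨d', hdD', hdj, hdb'⟩ := hj
  have hdd : d = d' := D_adj_unique U D hD hdD hdD' hdb hdb'
  subst hdd
  exact comps_disjoint' U hne hdi hdj

/-- Crossing-based key lemma: if `b'` overtakes `b` at `m`, and at a different component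
`j` the vertex `b` has a neighbor `x` which is not a neighbor of `b'`, then every
non-neighbor of `b` in `A_j` is a neighbor of `b'`. -/
lemma key_lemma (U : UnipolarSetting V) {b b' : V} (hb : b ∈ U.B) (hb' : b' ∈ U.B)
    {m j : Fin U.k} (hne : j ≠ m) (hov : Overtakes U b b' m)
    {x : V} (hx : x ∈ U.comps j) (hbx : U.G.Adj b x) (hbx' : ¬ U.G.Adj b' x) :
    ∀ s ∈ U.comps j, ¬ U.G.Adj b s → U.G.Adj b' s := by
  intro s hs hbs
  obtain ⟨y, hy, z, hz, hyz, hby, hbz, hb'y, hb'z⟩ := hov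
  have hxs : x ≠ s := by rintro rfl; exact hbs hbx
  have hadjxs : U.G.Adj x s := U.comps_clique j hx hs hxs
  have hcr := U.crossing j m hne b hb b' hb' x hx s hs y hy z hz hadjxs hyz hbx hbs hb'y hb'z
  rcases hcr with h | h | h | h
  · exact absurd h hbx'
  · exact h
  · exact absurd h hby
  · exact absurd h hbz

/-- If `b'` overtakes `b` at two distinct components, then `b'` includes `b` at each. -/
lemma overtake_includes (U : UnipolarSetting V) {b b' : V} (hb : b ∈ U.B) (hb' : b' ∈ U.B)
    {m j : Fin U.k} (hne : j ≠ m) (hovm : Overtakes U b b' m)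
    (hovj : Overtakes U b b' j) : Includes U b b' j := by
  rintro x ⟨hxN, hxC⟩
  refine ⟨?_, hxC⟩
  by_contra hnadj
  obtain ⟨y, hy, z, hz, hyz, hby, hbz, hb'y, hb'z⟩ := hovj
  exact hb'z (key_lemma U hb hb' hne hovm hxC hxN hnadj z hz hbz)

/-- Antisymmetry of overtaking at distinct components, via the crossing condition. -/
lemma overtake_antisym (U : UnipolarSetting V) {b₁ b₂ : V} (hb₁ : b₁ ∈ U.B) (hb₂ : b₂ ∈ U.B)
    {m w : Fin U.k} (hne : m ≠ w)
    (h1 : Overtakes U b₁ b₂ m) (h2 : Overtakes U b₂ b₁ w) : False := by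
  obtain ⟨y, hy, z, hz, hyz, h1y, h1z, h2y, h2z⟩ := h1
  obtain ⟨y', hy', z', hz', hyz', h2y', h2z', h1y', h1z'⟩ := h2
  have hcr := U.crossing m w hne b₂ hb₂ b₁ hb₁ y hy z hz y' hy' z' hz'
    hyz hyz' h2y h2z h1y' h1z'
  rcases hcr with h | h | h | h
  · exact h1y h
  · exact h1z h
  · exact h2y' h
  · exact h2z' h

/-- The inductive step along the cycle. -/
lemma step_lemma (U : UnipolarSetting V) (D : Set V) (hD : IsEDS U.G D)
    (hDB : D ∩ U.B = ∅) {b0 bt bt1 : V}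
    (hb0 : b0 ∈ U.B) (hbt : bt ∈ U.B) (hbt1 : bt1 ∈ U.B)
    (hP : ∃ m, Overtakes U b0 bt m ∧ Includes U b0 bt m)
    (harr : Arrow U bt bt1) :
    ∃ m, Overtakes U b0 bt1 m ∧ Includes U b0 bt1 m := by
  obtain ⟨m, hovm, hincm⟩ := hP
  obtain ⟨i, j, l, hij, hil, hjl, oi, oj, ol⟩ := harr
  have inc_i : Includes U bt bt1 i := overtake_includes U hbt hbt1 hij oj oi
  have inc_j : Includes U bt bt1 j := overtake_includes U hbt hbt1 (Ne.symm hij) oi oj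
  have inc_l : Includes U bt bt1 l := overtake_includes U hbt hbt1 (Ne.symm hil) oi ol
  -- solver for a single component w
  have solve : ∀ w : Fin U.k, Overtakes U bt bt1 w → Includes U bt bt1 w →
      (w = m ∨ (¬ Blocked U D b0 w ∧ ¬ Blocked U D bt w)) →
      ∃ m', Overtakes U b0 bt1 m' ∧ Includes U b0 bt1 m' := by
    intro w hovw hincw hcase
    obtain ⟨y, hy, z, hz, hyz, hty, htz, h1y, h1z⟩ := hovw
    rcases hcase with rfl | ⟨hnb0, hnbt⟩
    · -- w = m
      have h0y : ¬ U.G.Adj b0 y := fun h => hty (hincm ⟨h, hy⟩).1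
      have h0z : ¬ U.G.Adj b0 z := fun h => htz (hincm ⟨h, hz⟩).1
      exact ⟨w, ⟨y, hy, z, hz, hyz, h0y, h0z, h1y, h1z⟩,
        fun x hx => hincw (hincm hx)⟩
    · -- the unblocked case
      by_cases hwm : w = m
      · subst hwm
        have h0y : ¬ U.G.Adj b0 y := fun h => hty (hincm ⟨h, hy⟩).1
        have h0z : ¬ U.G.Adj b0 z := fun h => htz (hincm ⟨h, hz⟩).1
        exact ⟨w, ⟨y, hy, z, hz, hyz, h0y, h0z, h1y, h1z⟩,
          fun x hx => hincw (hincm hx)⟩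
      · have hinc0 : Includes U b0 bt w := by
          rintro x ⟨hxN, hxC⟩
          refine ⟨?_, hxC⟩
          by_contra hnadj
          have hall := key_lemma U hb0 hbt hwm hovm hxC hxN hnadj
          obtain ⟨d, hdD, hdC⟩ := exists_D_in_comp U D hD hDB w
          by_cases hd0 : U.G.Adj b0 d
          · exact hnb0 ⟨d, hdD, hdC, hd0.symm⟩
          · exact hnbt ⟨d, hdD, hdC, (hall d hdC hd0).symm⟩
        have h0y : ¬ U.G.Adj b0 y := fun h => hty (hinc0 ⟨h, hy⟩).1
        have h0z : ¬ U.G.Adj b0 z := fun h => htz (hinc0 ⟨h, hz⟩).1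
        exact ⟨w, ⟨y, hy, z, hz, hyz, h0y, h0z, h1y, h1z⟩,
          fun x hx => hincw (hinc0 hx)⟩
  -- pigeonhole over the three components i, j, l
  by_cases h1 : Blocked U D b0 i ∨ Blocked U D bt i
  · by_cases h2 : Blocked U D b0 j ∨ Blocked U D bt j
    · have hl0 : ¬ Blocked U D b0 l := by
        intro hBl
        rcases h1 with h | h
        · exact blocked_unique U D hD hil h hBl
        · rcases h2 with h' | h'
          · exact blocked_unique U D hD hjl h' hBl
          · exact blocked_unique U D hD hij h h'
      have hlt : ¬ Blocked U D bt l := by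
        intro hBl
        rcases h1 with h | h
        · rcases h2 with h' | h'
          · exact blocked_unique U D hD hij h h'
          · exact blocked_unique U D hD hjl h' hBl
        · exact blocked_unique U D hD hil h hBl
      exact solve l ol inc_l (Or.inr ⟨hl0, hlt⟩)
    · exact solve j oj inc_j (Or.inr (not_or.mp h2))
  · exact solve i oi inc_i (Or.inr (not_or.mp h1))

end AuxLemmas

/-- In the unipolar setting with an efficient dominating set `D`, `D ∩ B = ∅`, the
directed graph `H = (B, →)` is acyclic: there is no sequence `b₁, …, b_h ∈ B` with
`h ≥ 2` such that `b₁ → b₂ → … → b_h → b₁`. -/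
theorem stmt_18 {V : Type*} [Fintype V] (U : UnipolarSetting V)
    (D : Set V) (hD : IsEDS U.G D) (hDB : D ∩ U.B = ∅) :
    ¬ ∃ (h : ℕ) (b : ℕ → V), 2 ≤ h ∧ (∀ t, t < h → b t ∈ U.B) ∧
      (∀ t, t + 1 < h → Arrow U (b t) (b (t + 1))) ∧
      Arrow U (b (h - 1)) (b 0) := by
  rintro ⟨h, b, hh, hbB, harr, hlast⟩
  have hb0 : b 0 ∈ U.B := hbB 0 (by omega)
  have P : ∀ t, 1 ≤ t → t ≤ h - 1 →
      ∃ m, Overtakes U (b 0) (b t) m ∧ Includes U (b 0) (b t) m := by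
    intro t
    induction t with
    | zero => intro h1 _; omega
    | succ n ih =>
      intro _ h2
      rcases Nat.eq_zero_or_pos n with rfl | hn
      · obtain ⟨i, j, l, hij, hil, hjl, oi, oj, ol⟩ := harr 0 (by omega)
        have hb1 : b 1 ∈ U.B := hbB 1 (by omega)
        exact ⟨i, oi, overtake_includes U hb0 hb1 hij oj oi⟩
      · have hPn := ih (by omega) (by omega)
        exact step_lemma U D hD hDB hb0 (hbB n (by omega)) (hbB (n+1) (by omega))
          hPn (harr n (by omega))
  obtain ⟨m, hov, -⟩ := P (h - 1) (by omega) (le_refl _)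
  obtain ⟨i, j, l, hij, hil, hjl, oi, oj, ol⟩ := hlast
  have hbh : b (h-1) ∈ U.B := hbB (h-1) (by omega)
  by_cases him : i = m
  · exact overtake_antisym U hb0 hbh (fun hmj => hij (him.trans hmj)) hov oj
  · exact overtake_antisym U hb0 hbh (Ne.symm him) hov oi
end

section
/- In the unipolar setting, assume additionally that G has an efficient dominating set D with D ∩ B = ∅ and that B is nonempty. Define the relation → on B by: b_1 → b_2 if b_2 overtakes b_1 for at least three distinct components of G[A]. Then there exists a good vertex b* ∈ B, i.e., a vertex b* such that b* → b holds for no b ∈ B. -/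
open SimpleGraph

section AuxLemmas

variable {V : Type*}

/-- Members of a component are in `A`. -/
lemma comp_sub_A (U : UnipolarSetting V) {i : Fin U.k} {x : V}
    (hx : x ∈ U.comps i) : x ∈ U.A :=
  (U.comps_isComp i).1 hx

/-- Components are closed under adjacency into `A`. -/
lemma comp_closed (U : UnipolarSetting V) {i : Fin U.k} {x y : V}
    (hx : x ∈ U.comps i) (hy : y ∈ U.A) (hadj : U.G.Adj x y) : y ∈ U.comps i :=
  (U.comps_isComp i).2.2.2 x hx y hy hadj

/-- Two distinct vertices of a component are adjacent. -/
lemma comp_adj (U : UnipolarSetting V) {i : Fin U.k} {x y : V}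
    (hx : x ∈ U.comps i) (hy : y ∈ U.comps i) (hne : x ≠ y) : U.G.Adj x y :=
  U.comps_clique i hx hy hne

/-- Walking inside component `i`, membership in component `j` is preserved. -/
lemma comp_walk_closed (U : UnipolarSetting V) {i j : Fin U.k} :
    ∀ {a b : U.comps i} (_ : (U.G.induce (U.comps i)).Walk a b),
      (a : V) ∈ U.comps j → (b : V) ∈ U.comps j := by
  intro a b p
  induction p with
  | nil => exact id
  | @cons u v w h p ih =>
    intro hu
    exact ih (comp_closed U hu (comp_sub_A U v.2) h)

/-- A vertex lies in at most one component. -/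
lemma comp_unique (U : UnipolarSetting V) {i j : Fin U.k} {v : V}
    (hvi : v ∈ U.comps i) (hvj : v ∈ U.comps j) : i = j := by
  have hsub : ∀ {i j : Fin U.k} {v : V}, v ∈ U.comps i → v ∈ U.comps j →
      U.comps i ⊆ U.comps j := by
    intro i j v hvi hvj x hx
    have hconn := (U.comps_isComp i).2.2.1
    obtain ⟨p⟩ := hconn.preconnected ⟨v, hvi⟩ ⟨x, hx⟩
    exact comp_walk_closed U p hvj
  exact U.comps_inj (Set.Subset.antisymm (hsub hvi hvj) (hsub hvj hvi))

/-- A vertex cannot overtake itself. -/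
lemma not_overtakes_self (U : UnipolarSetting V) {b : V} {c : Fin U.k}
    (h : Overtakes U b b c) : False := by
  obtain ⟨y, _, z, _, _, h1, _, h2, _⟩ := h
  exact h1 h2

end AuxLemmas


section KeyLemmas

variable {V : Type*} (U : UnipolarSetting V) {b₀ b₁ b₂ : V}

/-- If `b₁` overtakes `b₀` in two components and `b₁` is overtaken by `b₂` in one of
them, then `b₂` overtakes `b₀` there as well. -/
lemma ov_common (hb₀ : b₀ ∈ U.B) (hb₁ : b₁ ∈ U.B) (hb₂ : b₂ ∈ U.B) {a c : Fin U.k} (hac : a ≠ c)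
    (hOa : Overtakes U b₀ b₁ a) (hOc : Overtakes U b₀ b₁ c)
    (hOc2 : Overtakes U b₁ b₂ c) : Overtakes U b₀ b₂ c := by
  obtain ⟨ya, hya, za, hza, hyza, h0ya, h0za, h1ya, h1za⟩ := hOa
  obtain ⟨y, hy, z, hz, hyz, h0y, h0z, h1y, h1z⟩ := hOc
  obtain ⟨u, hu, w, hw, huw, h1u, h1w, h2u, h2w⟩ := hOc2
  by_cases h0u : U.G.Adj b₀ u
  · -- b₀ adjacent to u; then use edge (u, z) to derive a contradiction
    have huz : u ≠ z := fun h => h0z (h ▸ h0u)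
    have hadj : U.G.Adj u z := comp_adj U hu hz huz
    have := U.crossing c a hac.symm b₀ hb₀ b₁ hb₁ u hu z hz ya hya za hza
      hadj hyza h0u h0z h1ya h1za
    rcases this with h | h | h | h
    · exact absurd h h1u
    · exact absurd h h1z
    · exact absurd h h0ya
    · exact absurd h h0za
  · by_cases h0w : U.G.Adj b₀ w
    · -- b₀ adjacent to w but not u: contradiction via edge (w, u)
      have := U.crossing c a hac.symm b₀ hb₀ b₁ hb₁ w hw u hu ya hya za hza
        huw.symm hyza h0w h0u h1ya h1za
      rcases this with h | h | h | h
      · exact absurd h h1w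
      · exact absurd h h1u
      · exact absurd h h0ya
      · exact absurd h h0za
    · exact ⟨u, hu, w, hw, huw, h0u, h0w, h2u, h2w⟩

/-- Ownership of a "bad" component of `O₂₁` (basic version): its `d`-vertex is a
neighbor of `b₀` or of `b₁`. -/
lemma owner_q_basic (hb₀ : b₀ ∈ U.B) (hb₁ : b₁ ∈ U.B) (hb₂ : b₂ ∈ U.B) {a c : Fin U.k} (hac : a ≠ c)
    (hOa : Overtakes U b₀ b₁ a) (hOc2 : Overtakes U b₁ b₂ c)
    (hbad : ¬ Overtakes U b₀ b₂ c) {dc : V} (hdc : dc ∈ U.comps c) :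
    U.G.Adj b₀ dc ∨ U.G.Adj b₁ dc := by
  obtain ⟨ya, hya, za, hza, hyza, h0ya, h0za, h1ya, h1za⟩ := hOa
  obtain ⟨u, hu, w, hw, huw, h1u, h1w, h2u, h2w⟩ := hOc2
  by_cases h0u : U.G.Adj b₀ u
  · by_cases h0d : U.G.Adj b₀ dc
    · exact Or.inl h0d
    · have hud : u ≠ dc := fun h => h0d (h ▸ h0u)
      have hadj : U.G.Adj u dc := comp_adj U hu hdc hud
      have := U.crossing c a hac.symm b₀ hb₀ b₁ hb₁ u hu dc hdc ya hya za hza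
        hadj hyza h0u h0d h1ya h1za
      rcases this with h | h | h | h
      · exact absurd h h1u
      · exact Or.inr h
      · exact absurd h h0ya
      · exact absurd h h0za
  · by_cases h0w : U.G.Adj b₀ w
    · have := U.crossing c a hac.symm b₀ hb₀ b₁ hb₁ w hw u hu ya hya za hza
        huw.symm hyza h0w h0u h1ya h1za
      rcases this with h | h | h | h
      · exact absurd h h1w
      · exact absurd h h1u
      · exact absurd h h0ya
      · exact absurd h h0za
    · exact absurd ⟨u, hu, w, hw, huw, h0u, h0w, h2u, h2w⟩ hbad

/-- Ownership of a "bad" component of `O₂₁`, refined using a good component `e`: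
its `d`-vertex is a neighbor of `b₀` or of `b₂`. -/
lemma owner_q_good (hb₀ : b₀ ∈ U.B) (hb₁ : b₁ ∈ U.B) (hb₂ : b₂ ∈ U.B) {a c e : Fin U.k} (hac : a ≠ c) (hec : e ≠ c)
    (hOa : Overtakes U b₀ b₁ a) (hOc2 : Overtakes U b₁ b₂ c)
    (hbad : ¬ Overtakes U b₀ b₂ c) (hOe : Overtakes U b₀ b₂ e)
    {dc : V} (hdc : dc ∈ U.comps c) :
    U.G.Adj b₀ dc ∨ U.G.Adj b₂ dc := by
  obtain ⟨ya, hya, za, hza, hyza, h0ya, h0za, h1ya, h1za⟩ := hOa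
  obtain ⟨u, hu, w, hw, huw, h1u, h1w, h2u, h2w⟩ := hOc2
  obtain ⟨p, hp, q, hq, hpq, h0p, h0q, h2p, h2q⟩ := hOe
  by_cases h0u : U.G.Adj b₀ u
  · by_cases h0w : U.G.Adj b₀ w
    · -- both u, w adjacent to b₀
      by_cases h0d : U.G.Adj b₀ dc
      · exact Or.inl h0d
      · by_cases h2d : U.G.Adj b₂ dc
        · exact Or.inr h2d
        · -- weapon: crossing between c and e
          have hwd : w ≠ dc := fun h => h0d (h ▸ h0w)
          have hadj : U.G.Adj w dc := comp_adj U hw hdc hwd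
          have := U.crossing c e hec.symm b₀ hb₀ b₂ hb₂ w hw dc hdc p hp q hq
            hadj hpq h0w h0d h2p h2q
          rcases this with h | h | h | h
          · exact absurd h h2w
          · exact absurd h h2d
          · exact absurd h h0p
          · exact absurd h h0q
    · -- b₀ adjacent to u but not w : contradiction
      have := U.crossing c a hac.symm b₀ hb₀ b₁ hb₁ u hu w hw ya hya za hza
        huw hyza h0u h0w h1ya h1za
      rcases this with h | h | h | h
      · exact absurd h h1u
      · exact absurd h h1w
      · exact absurd h h0ya
      · exact absurd h h0za
  · by_cases h0w : U.G.Adj b₀ w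
    · have := U.crossing c a hac.symm b₀ hb₀ b₁ hb₁ w hw u hu ya hya za hza
        huw.symm hyza h0w h0u h1ya h1za
      rcases this with h | h | h | h
      · exact absurd h h1w
      · exact absurd h h1u
      · exact absurd h h0ya
      · exact absurd h h0za
    · exact absurd ⟨u, hu, w, hw, huw, h0u, h0w, h2u, h2w⟩ hbad

/-- Ownership of a "bad" component of `O₁₀`: its `d`-vertex is a neighbor of `b₀`
or of `b₂`. -/
lemma owner_p (hb₀ : b₀ ∈ U.B) (hb₁ : b₁ ∈ U.B) (hb₂ : b₂ ∈ U.B) {a c' : Fin U.k} (hca : c' ≠ a)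
    (hOa : Overtakes U b₀ b₁ a) (hOc' : Overtakes U b₁ b₂ c')
    (hbad : ¬ Overtakes U b₀ b₂ a) {da : V} (hda : da ∈ U.comps a) :
    U.G.Adj b₀ da ∨ U.G.Adj b₂ da := by
  obtain ⟨y, hy, z, hz, hyz, h0y, h0z, h1y, h1z⟩ := hOa
  obtain ⟨u, hu, w, hw, huw, h1u, h1w, h2u, h2w⟩ := hOc'
  by_cases h0d : U.G.Adj b₀ da
  · exact Or.inl h0d
  by_cases h2d : U.G.Adj b₂ da
  · exact Or.inr h2d
  -- find y₀ ∈ {y, z} with b₂ adjacent to y₀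
  have h2yz : U.G.Adj b₂ y ∨ U.G.Adj b₂ z := by
    have := U.crossing a c' (fun h => hca h.symm) b₁ hb₁ b₂ hb₂ y hy z hz u hu w hw
      hyz huw h1y h1z h2u h2w
    rcases this with h | h | h | h
    · exact Or.inl h
    · exact Or.inr h
    · exact absurd h h1u
    · exact absurd h h1w
  rcases h2yz with h2y0 | h2y0
  · have hyd : y ≠ da := fun h => h2d (h ▸ h2y0)
    exact absurd ⟨y, hy, da, hda, comp_adj U hy hda hyd, h0y, h0d, h2y0, h2d⟩ hbad
  · have hzd : z ≠ da := fun h => h2d (h ▸ h2y0)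
    exact absurd ⟨z, hz, da, hda, comp_adj U hz hda hzd, h0z, h0d, h2y0, h2d⟩ hbad

end KeyLemmas


section Counting

variable {V : Type*} (U : UnipolarSetting V) {b₀ b₁ b₂ : V}

/-- Core counting argument: assuming `b₂` overtakes `b₀` in at most one component,
there cannot be two distinct components where `b₂` overtakes `b₁` but not `b₀`. -/
lemma no_two_bad (hb₀ : b₀ ∈ U.B) (hb₁ : b₁ ∈ U.B) (hb₂ : b₂ ∈ U.B)
    {a₁ a₂ : Fin U.k} (ha12 : a₁ ≠ a₂)
    (hOa₁ : Overtakes U b₀ b₁ a₁) (hOa₂ : Overtakes U b₀ b₁ a₂)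
    (d : Fin U.k → V) (hdmem : ∀ i, d i ∈ U.comps i)
    (hH0 : ∀ i j, U.G.Adj b₀ (d i) → U.G.Adj b₀ (d j) → i = j)
    (hH1 : ∀ i j, U.G.Adj b₁ (d i) → U.G.Adj b₁ (d j) → i = j)
    (hH2 : ∀ i j, U.G.Adj b₂ (d i) → U.G.Adj b₂ (d j) → i = j)
    (H : ∀ e₁ e₂, Overtakes U b₀ b₂ e₁ → Overtakes U b₀ b₂ e₂ → e₁ = e₂)
    (ci cj : Fin U.k) (hij : ci ≠ cj)
    (hOci : Overtakes U b₁ b₂ ci) (hOcj : Overtakes U b₁ b₂ cj)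
    (hbi : ¬ Overtakes U b₀ b₂ ci) (hbj : ¬ Overtakes U b₀ b₂ cj) : False := by
  -- bad components of O₂₁ are not in O₁₀
  have haux : ∀ c, Overtakes U b₁ b₂ c → ¬ Overtakes U b₀ b₂ c →
      ¬ Overtakes U b₀ b₁ c := by
    intro c hO21 hbad hO10
    rcases ne_or_eq a₁ c with h | h
    · exact hbad (ov_common U hb₀ hb₁ hb₂ h hOa₁ hO10 hO21)
    · have h2 : a₂ ≠ c := fun hh => ha12 (h.trans hh.symm)
      exact hbad (ov_common U hb₀ hb₁ hb₂ h2 hOa₂ hO10 hO21)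
  have hci10 : ¬ Overtakes U b₀ b₁ ci := haux ci hOci hbi
  have hcj10 : ¬ Overtakes U b₀ b₁ cj := haux cj hOcj hbj
  have ha1ci : a₁ ≠ ci := fun h => hci10 (h ▸ hOa₁)
  have ha1cj : a₁ ≠ cj := fun h => hcj10 (h ▸ hOa₁)
  have ha2ci : a₂ ≠ ci := fun h => hci10 (h ▸ hOa₂)
  have ha2cj : a₂ ≠ cj := fun h => hcj10 (h ▸ hOa₂)
  by_cases g1 : Overtakes U b₀ b₂ a₁
  · by_cases g2 : Overtakes U b₀ b₂ a₂
    · exact ha12 (H a₁ a₂ g1 g2)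
    · -- a₁ good, a₂ bad
      have o1 := owner_q_good U hb₀ hb₁ hb₂ ha1ci ha1ci hOa₁ hOci hbi g1 (hdmem ci)
      have o2 := owner_q_good U hb₀ hb₁ hb₂ ha1cj ha1cj hOa₁ hOcj hbj g1 (hdmem cj)
      have o3 := owner_p U hb₀ hb₁ hb₂ ha2ci.symm hOa₂ hOci g2 (hdmem a₂)
      rcases o1 with h1 | h1 <;> rcases o2 with h2 | h2 <;> rcases o3 with h3 | h3
      · exact hij (hH0 ci cj h1 h2)
      · exact hij (hH0 ci cj h1 h2)
      · exact ha2ci (hH0 ci a₂ h1 h3).symm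
      · exact ha2cj (hH2 cj a₂ h2 h3).symm
      · exact ha2cj (hH0 cj a₂ h2 h3).symm
      · exact ha2ci (hH2 ci a₂ h1 h3).symm
      · exact hij (hH2 ci cj h1 h2)
      · exact hij (hH2 ci cj h1 h2)
  · by_cases g2 : Overtakes U b₀ b₂ a₂
    · -- a₂ good, a₁ bad
      have o1 := owner_q_good U hb₀ hb₁ hb₂ ha1ci ha2ci hOa₁ hOci hbi g2 (hdmem ci)
      have o2 := owner_q_good U hb₀ hb₁ hb₂ ha1cj ha2cj hOa₁ hOcj hbj g2 (hdmem cj)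
      have o3 := owner_p U hb₀ hb₁ hb₂ ha1ci.symm hOa₁ hOci g1 (hdmem a₁)
      rcases o1 with h1 | h1 <;> rcases o2 with h2 | h2 <;> rcases o3 with h3 | h3
      · exact hij (hH0 ci cj h1 h2)
      · exact hij (hH0 ci cj h1 h2)
      · exact ha1ci (hH0 ci a₁ h1 h3).symm
      · exact ha1cj (hH2 cj a₁ h2 h3).symm
      · exact ha1cj (hH0 cj a₁ h2 h3).symm
      · exact ha1ci (hH2 ci a₁ h1 h3).symm
      · exact hij (hH2 ci cj h1 h2)
      · exact hij (hH2 ci cj h1 h2)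
    · -- both a₁, a₂ bad
      have o3 := owner_p U hb₀ hb₁ hb₂ ha1ci.symm hOa₁ hOci g1 (hdmem a₁)
      have o4 := owner_p U hb₀ hb₁ hb₂ ha2ci.symm hOa₂ hOci g2 (hdmem a₂)
      have o1 := owner_q_basic U hb₀ hb₁ hb₂ ha1ci hOa₁ hOci hbi (hdmem ci)
      have o2 := owner_q_basic U hb₀ hb₁ hb₂ ha1cj hOa₁ hOcj hbj (hdmem cj)
      rcases o3 with h3 | h3 <;> rcases o4 with h4 | h4
      · exact ha12 (hH0 a₁ a₂ h3 h4)
      · -- b₀ owns a₁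
        rcases o1 with h1 | h1
        · exact ha1ci.symm (hH0 ci a₁ h1 h3)
        · rcases o2 with h2 | h2
          · exact ha1cj.symm (hH0 cj a₁ h2 h3)
          · exact hij (hH1 ci cj h1 h2)
      · -- b₀ owns a₂
        rcases o1 with h1 | h1
        · exact ha2ci.symm (hH0 ci a₂ h1 h4)
        · rcases o2 with h2 | h2
          · exact ha2cj.symm (hH0 cj a₂ h2 h4)
          · exact hij (hH1 ci cj h1 h2)
      · exact ha12 (hH2 a₁ a₂ h3 h4)

/-- Key propagation lemma: if `b₁` overtakes `b₀` in two components and `b₂` overtakes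
`b₁` in three components, then `b₂` overtakes `b₀` in two components. -/
lemma two_ov_step (hb₀ : b₀ ∈ U.B) (hb₁ : b₁ ∈ U.B) (hb₂ : b₂ ∈ U.B)
    {a₁ a₂ : Fin U.k} (ha12 : a₁ ≠ a₂)
    (hOa₁ : Overtakes U b₀ b₁ a₁) (hOa₂ : Overtakes U b₀ b₁ a₂)
    (d : Fin U.k → V) (hdmem : ∀ i, d i ∈ U.comps i)
    (hH0 : ∀ i j, U.G.Adj b₀ (d i) → U.G.Adj b₀ (d j) → i = j)
    (hH1 : ∀ i j, U.G.Adj b₁ (d i) → U.G.Adj b₁ (d j) → i = j)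
    (hH2 : ∀ i j, U.G.Adj b₂ (d i) → U.G.Adj b₂ (d j) → i = j)
    {c₁ c₂ c₃ : Fin U.k} (h12 : c₁ ≠ c₂) (h13 : c₁ ≠ c₃) (h23 : c₂ ≠ c₃)
    (hOc₁ : Overtakes U b₁ b₂ c₁) (hOc₂ : Overtakes U b₁ b₂ c₂)
    (hOc₃ : Overtakes U b₁ b₂ c₃) :
    ∃ e₁ e₂ : Fin U.k, e₁ ≠ e₂ ∧ Overtakes U b₀ b₂ e₁ ∧ Overtakes U b₀ b₂ e₂ := by
  by_contra hno
  have H : ∀ e₁ e₂, Overtakes U b₀ b₂ e₁ → Overtakes U b₀ b₂ e₂ → e₁ = e₂ := by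
    intro e₁ e₂ h1 h2
    by_contra hne
    exact hno ⟨e₁, e₂, hne, h1, h2⟩
  have NTB := no_two_bad U hb₀ hb₁ hb₂ ha12 hOa₁ hOa₂ d hdmem hH0 hH1 hH2 H
  by_cases g1 : Overtakes U b₀ b₂ c₁
  · by_cases g2 : Overtakes U b₀ b₂ c₂
    · exact h12 (H c₁ c₂ g1 g2)
    · by_cases g3 : Overtakes U b₀ b₂ c₃
      · exact h13 (H c₁ c₃ g1 g3)
      · exact NTB c₂ c₃ h23 hOc₂ hOc₃ g2 g3
  · by_cases g2 : Overtakes U b₀ b₂ c₂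
    · by_cases g3 : Overtakes U b₀ b₂ c₃
      · exact h23 (H c₂ c₃ g2 g3)
      · exact NTB c₁ c₃ h13 hOc₁ hOc₃ g1 g3
    · exact NTB c₁ c₂ h12 hOc₁ hOc₂ g1 g2

end Counting

/-- In the unipolar setting with an efficient dominating set `D`, `D ∩ B = ∅`, and `B`
nonempty, there exists a good vertex `b* ∈ B`, i.e. one with `b* → b` for no `b ∈ B`. -/
theorem stmt_19 {V : Type*} [Fintype V] (U : UnipolarSetting V)
    (D : Set V) (hD : IsEDS U.G D) (hDB : D ∩ U.B = ∅) (hB : U.B.Nonempty) :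
    ∃ bstar ∈ U.B, ∀ b ∈ U.B, ¬ Arrow U bstar b := by
  classical
  -- construct the `d`-vertex of each component
  have hdex : ∀ i : Fin U.k, ∃ dv : V, dv ∈ U.comps i ∧ dv ∈ D := by
    intro i
    obtain ⟨x, hx⟩ := (U.comps_isComp i).2.1
    obtain ⟨dv, ⟨hdvD, hdvdom⟩, -⟩ := hD x
    have hdvA : dv ∈ U.A := by
      rcases (U.cover_univ ▸ Set.mem_univ dv : dv ∈ U.A ∪ U.B) with h | h
      · exact h
      · exact absurd (hDB ▸ (⟨hdvD, h⟩ : dv ∈ D ∩ U.B) : dv ∈ (∅ : Set V))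
          (Set.notMem_empty dv)
    rcases hdvdom with h | h
    · exact ⟨dv, h ▸ hx, hdvD⟩
    · exact ⟨dv, comp_closed U hx hdvA h.symm, hdvD⟩
  choose d hdmem hdD using hdex
  -- a vertex of B is adjacent to at most one d-vertex
  have hH : ∀ b ∈ U.B, ∀ i j, U.G.Adj b (d i) → U.G.Adj b (d j) → i = j := by
    intro b hb i j hbi hbj
    obtain ⟨dd, -, huniq⟩ := hD b
    have e1 : d i = dd := huniq (d i) ⟨hdD i, Or.inr hbi.symm⟩
    have e2 : d j = dd := huniq (d j) ⟨hdD j, Or.inr hbj.symm⟩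
    exact comp_unique U (hdmem i) ((e1.trans e2.symm) ▸ hdmem j)
  by_contra hno
  push_neg at hno
  -- choose a successor function
  have hsucc : ∀ v : V, ∃ w : V, v ∈ U.B → w ∈ U.B ∧ Arrow U v w := by
    intro v
    by_cases hv : v ∈ U.B
    · obtain ⟨w, hw, ha⟩ := hno v hv
      exact ⟨w, fun _ => ⟨hw, ha⟩⟩
    · exact ⟨v, fun h => absurd h hv⟩
  choose f hf using hsucc
  obtain ⟨b0, hb0⟩ := hB
  -- iterates stay in B
  have hmemb : ∀ b : V, b ∈ U.B → ∀ n : ℕ, f^[n] b ∈ U.B := by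
    intro b hb n
    induction n with
    | zero => exact hb
    | succ n ih =>
      rw [Function.iterate_succ_apply']
      exact (hf _ ih).1
  have hmem : ∀ n : ℕ, f^[n] b0 ∈ U.B := hmemb b0 hb0
  -- the chain property
  have hchain : ∀ b : V, b ∈ U.B → ∀ n : ℕ,
      ∃ e₁ e₂ : Fin U.k, e₁ ≠ e₂ ∧ Overtakes U b (f^[n+1] b) e₁ ∧
        Overtakes U b (f^[n+1] b) e₂ := by
    intro b hb n
    induction n with
    | zero =>
      obtain ⟨i, j, l, hij, _, _, hOi, hOj, _⟩ := (hf b hb).2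
      exact ⟨i, j, hij, hOi, hOj⟩
    | succ n ih =>
      obtain ⟨a₁, a₂, ha12, hOa₁, hOa₂⟩ := ih
      have hmid : f^[n+1] b ∈ U.B := hmemb b hb (n+1)
      have hnext : f^[n+2] b ∈ U.B := by
        rw [show n + 2 = (n+1) + 1 by ring, Function.iterate_succ_apply']
        exact (hf _ hmid).1
      obtain ⟨i, j, l, hij, hil, hjl, hOi, hOj, hOl⟩ := (hf _ hmid).2
      have hstep : f^[n+1+1] b = f (f^[n+1] b) := Function.iterate_succ_apply' f (n+1) b
      rw [hstep]
      exact two_ov_step U hb hmid (hf _ hmid).1 ha12 hOa₁ hOa₂ d hdmem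
        (hH b hb) (hH _ hmid) (hH _ (hf _ hmid).1) hij hil hjl hOi hOj hOl
  -- find a repeat in the iterates
  obtain ⟨p, q, hpq, heq⟩ := Finite.exists_ne_map_eq_of_infinite (fun n : ℕ => f^[n] b0)
  rcases hpq.lt_or_gt with hlt | hlt
  all_goals {
    first
    | (have hkey := hchain (f^[p] b0) (hmem p) (q - p - 1)
       have harith : q - p - 1 + 1 = q - p := by omega
       rw [harith, ← Function.iterate_add_apply, show q - p + p = q by omega] at hkey
       obtain ⟨e₁, e₂, hne, hO1, hO2⟩ := hkey
       rw [← heq] at hO1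
       exact not_overtakes_self U hO1)
    | (have hkey := hchain (f^[q] b0) (hmem q) (p - q - 1)
       have harith : p - q - 1 + 1 = p - q := by omega
       rw [harith, ← Function.iterate_add_apply, show p - q + q = p by omega] at hkey
       obtain ⟨e₁, e₂, hne, hO1, hO2⟩ := hkey
       rw [heq] at hO1
       exact not_overtakes_self U hO1)
  }
end
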